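/- arXiv:2407.17660 — 2 statements merged into one kernel-verified Lean document; each statement's English description precedes it below -/
import Mathlib

section
/- Let α, β ∈ NCP(n) form an n-admissible pair. Then α² ∗_n β and α ∗_n β² are noncrossing partitions of [3n], and the following identities hold: α ∘ β = ((α ⧢_n β) ∨ {{1,2},{3,4},…,{2n−1,2n}})^{1/2} = ((α² ⧢_n β) ∨ {{1,2,3},{4,5,6},…,{3n−2,3n−1,3n}})^{1/3} = ((α² ⧢_n β) ∨ {{2,3},{5,6},…,{3n−1,3n}})^{1/3} = ((α ⧢_n β²) ∨ {{1,2,3},{4,5,6},…,{3n−2,3n−1,3n}})^{1/3}. -/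
open scoped BigOperators

/-- A partition (setoid) of `Fin N` is noncrossing if there are no
`a < b < c < d` with `a ~ c`, `b ~ d` but `a ≁ b`. -/
def IsNoncrossing {N : ℕ} (π : Setoid (Fin N)) : Prop :=
  ∀ a b c d : Fin N, a < b → b < c → c < d → π a c → π b d → π a b

/-- The set of noncrossing partitions of `[N] = {1,…,N}`, modelled as
noncrossing setoids on `Fin N`. -/
abbrev NCP (N : ℕ) : Type := {π : Setoid (Fin N) // IsNoncrossing π}

theorem bot_isNoncrossing (N : ℕ) : IsNoncrossing (⊥ : Setoid (Fin N)) := by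
  intro a b c d hab hbc hcd hac _
  have h : a = c := by
    have := Setoid.bot_def (α := Fin N)
    exact by rw [show ((⊥ : Setoid (Fin N)) : Fin N → Fin N → Prop) = (· = ·) from this] at hac; exact hac
  exact absurd (h ▸ (hab.trans hbc)) (lt_irrefl a)

theorem top_isNoncrossing (N : ℕ) : IsNoncrossing (⊤ : Setoid (Fin N)) := by
  intro a b c d _ _ _ _ _
  show (⊤ : Setoid (Fin N)) a b
  rw [show ((⊤ : Setoid (Fin N)) : Fin N → Fin N → Prop) = ⊤ from Setoid.top_def]
  trivial

theorem inf_isNoncrossing {N : ℕ} {π μ : Setoid (Fin N)}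
    (hπ : IsNoncrossing π) (hμ : IsNoncrossing μ) : IsNoncrossing (π ⊓ μ) := by
  intro a b c d hab hbc hcd hac hbd
  have hac' : π a c ∧ μ a c := by
    rw [show ((π ⊓ μ : Setoid (Fin N)) : Fin N → Fin N → Prop) = ⇑π ⊓ ⇑μ from Setoid.inf_def] at hac
    exact hac
  have hbd' : π b d ∧ μ b d := by
    rw [show ((π ⊓ μ : Setoid (Fin N)) : Fin N → Fin N → Prop) = ⇑π ⊓ ⇑μ from Setoid.inf_def] at hbd
    exact hbd
  show (π ⊓ μ) a b
  rw [show ((π ⊓ μ : Setoid (Fin N)) : Fin N → Fin N → Prop) = ⇑π ⊓ ⇑μ from Setoid.inf_def]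
  exact ⟨hπ a b c d hab hbc hcd hac'.1 hbd'.1, hμ a b c d hab hbc hcd hac'.2 hbd'.2⟩

/-- The join of two partitions in the lattice of noncrossing partitions:
the finest noncrossing partition coarser than both. -/
def ncSup {N : ℕ} (π μ : Setoid (Fin N)) : Setoid (Fin N) :=
  sInf {γ : Setoid (Fin N) | IsNoncrossing γ ∧ π ≤ γ ∧ μ ≤ γ}

theorem ncSup_isNoncrossing {N : ℕ} (π μ : Setoid (Fin N)) : IsNoncrossing (ncSup π μ) := by
  intro a b c d hab hbc hcd hac hbd
  unfold ncSup at hac hbd ⊢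
  rw [Setoid.sInf_iff] at hac hbd ⊢
  intro γ hγ
  exact hγ.1 a b c d hab hbc hcd (hac γ hγ) (hbd γ hγ)

noncomputable instance NCP.instLattice (N : ℕ) : Lattice (NCP N) :=
  { (inferInstance : PartialOrder (NCP N)) with
    sup := fun α β => ⟨ncSup α.1 β.1, ncSup_isNoncrossing _ _⟩
    inf := fun α β => ⟨α.1 ⊓ β.1, inf_isNoncrossing α.2 β.2⟩
    le_sup_left := fun α β => by
      show α.1 ≤ ncSup α.1 β.1
      exact le_sInf fun γ hγ => hγ.2.1
    le_sup_right := fun α β => by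
      show β.1 ≤ ncSup α.1 β.1
      exact le_sInf fun γ hγ => hγ.2.2
    sup_le := fun α β γ h1 h2 => by
      show ncSup α.1 β.1 ≤ γ.1
      exact sInf_le ⟨γ.2, h1, h2⟩
    inf_le_left := fun α β => by
      show α.1 ⊓ β.1 ≤ α.1
      exact inf_le_left
    inf_le_right := fun α β => by
      show α.1 ⊓ β.1 ≤ β.1
      exact inf_le_right
    le_inf := fun α β γ h1 h2 => by
      show α.1 ≤ β.1 ⊓ γ.1
      exact le_inf h1 h2 }

instance NCP.instOrderBot (N : ℕ) : OrderBot (NCP N) where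
  bot := ⟨⊥, bot_isNoncrossing N⟩
  bot_le := fun α => by
    show (⊥ : Setoid (Fin N)) ≤ α.1
    exact bot_le

instance NCP.instOrderTop (N : ℕ) : OrderTop (NCP N) where
  top := ⟨⊤, top_isNoncrossing N⟩
  le_top := fun α => by
    show α.1 ≤ (⊤ : Setoid (Fin N))
    exact le_top

/-- The disjoint sum of two setoids: elements are related iff they lie on
the same side and are related there. -/
def sumSetoid {A B : Type*} (α : Setoid A) (β : Setoid B) : Setoid (A ⊕ B) where
  r x y := match x, y with
    | Sum.inl a, Sum.inl a' => α a a'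
    | Sum.inr b, Sum.inr b' => β b b'
    | _, _ => False
  iseqv := by
    constructor
    · intro x
      cases x with
      | inl a => exact α.refl' a
      | inr b => exact β.refl' b
    · intro x y h
      cases x <;> cases y <;>
        first
          | exact α.symm' h
          | exact β.symm' h
          | exact h.elim
    · intro x y z h1 h2
      cases x <;> cases y <;> cases z <;>
        first
          | exact α.trans' h1 h2
          | exact β.trans' h1 h2
          | exact h1.elim
          | exact h2.elim

/-- Decoding map for the `n`-perfect shuffle of a partition of `[n]`
(placed on odd positions) and a partition of `[n]` (placed on even positions). -/
def decode2 (n : ℕ) (x : Fin (2*n)) : Fin n ⊕ Fin n :=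
  if (x : ℕ) % 2 = 0 then Sum.inl ⟨(x:ℕ)/2, by have := x.isLt; omega⟩
  else Sum.inr ⟨(x:ℕ)/2, by have := x.isLt; omega⟩

/-- The `n`-perfect shuffle `α ∗_n β` of two partitions of `[n]`, a partition
of `[2n]`. -/
def shuffle2 {n : ℕ} (α β : Setoid (Fin n)) : Setoid (Fin (2*n)) :=
  Setoid.comap (decode2 n) (sumSetoid α β)

/-- The pair `(α, β)` is `n`-admissible if the `n`-perfect shuffle `α ∗_n β`
is noncrossing. -/
def Admissible2 {n : ℕ} (α β : NCP n) : Prop := IsNoncrossing (shuffle2 α.1 β.1)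

/-- The `p`-th power of a partition of `[n]`: each element is replicated `p`
times, all replicas being put in the same block. -/
def powSetoid (p : ℕ) {n : ℕ} (π : Setoid (Fin n)) : Setoid (Fin (p*n)) :=
  Setoid.comap (fun x : Fin (p*n) =>
    (⟨(x:ℕ)/p, by
        have hx := x.isLt
        rcases Nat.eq_zero_or_pos p with h|h
        · subst h; exact absurd hx (by omega)
        · exact Nat.div_lt_of_lt_mul hx⟩ : Fin n)) π

theorem isNoncrossing_comap_of_monotone {M N : ℕ} (f : Fin M → Fin N) (hf : Monotone f)
    {π : Setoid (Fin N)} (hπ : IsNoncrossing π) : IsNoncrossing (Setoid.comap f π) := by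
  intro a b c d hab hbc hcd hac hbd
  have h1 : f a ≤ f b := hf hab.le
  have h2 : f b ≤ f c := hf hbc.le
  have h3 : f c ≤ f d := hf hcd.le
  show π (f a) (f b)
  have hac' : π (f a) (f c) := hac
  have hbd' : π (f b) (f d) := hbd
  rcases eq_or_lt_of_le h1 with e1 | l1
  · rw [← e1]
  · rcases eq_or_lt_of_le h2 with e2 | l2
    · rw [e2]; exact hac'
    · rcases eq_or_lt_of_le h3 with e3 | l3
      · rw [← e3] at hbd'
        exact π.trans' hac' (π.symm' hbd')
      · exact hπ (f a) (f b) (f c) (f d) l1 l2 l3 hac' hbd'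

theorem powSetoid_isNoncrossing (p : ℕ) {n : ℕ} (π : NCP n) :
    IsNoncrossing (powSetoid p π.1) :=
  isNoncrossing_comap_of_monotone _ (fun x y h => by
    simp only [Fin.mk_le_mk]
    exact Nat.div_le_div_right h) π.2

/-- The `p`-th power map `NCP n → NCP (p·n)`. -/
def npow (p : ℕ) {n : ℕ} (π : NCP n) : NCP (p*n) := ⟨powSetoid p π.1, powSetoid_isNoncrossing p π⟩

open Classical in
/-- The `p`-th root `π^{1/p}` of a partition of `[pn]`: the unique preimage
under the `p`-th power map when it exists (junk value `⊥` otherwise). -/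
noncomputable def nroot (p n : ℕ) (π : Setoid (Fin (p*n))) : NCP n :=
  if h : ∃ σ : NCP n, (npow p σ).1 = π then h.choose else ⊥

/-- The interval partition `{{1,…,p},{p+1,…,2p},…,{pn−p+1,…,pn}}` of `[pn]`. -/
def intervalSetoid (p n : ℕ) : Setoid (Fin (p*n)) :=
  Setoid.ker (fun x : Fin (p*n) => (x:ℕ)/p)

theorem intervalSetoid_isNoncrossing (p n : ℕ) : IsNoncrossing (intervalSetoid p n) := by
  intro a b c d hab hbc hcd hac _
  have h1 : (a:ℕ)/p = (c:ℕ)/p := hac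
  have h2 : (a:ℕ)/p ≤ (b:ℕ)/p := Nat.div_le_div_right (le_of_lt hab)
  have h3 : (b:ℕ)/p ≤ (c:ℕ)/p := Nat.div_le_div_right (le_of_lt hbc)
  show (a:ℕ)/p = (b:ℕ)/p
  exact le_antisymm h2 (by rw [h1]; exact h3)

/-- The interval partition as a noncrossing partition. -/
def intervalNCP (p n : ℕ) : NCP (p*n) := ⟨intervalSetoid p n, intervalSetoid_isNoncrossing p n⟩

/-- The composition product `α ∘ β := ((α ⧢_n β) ∨ {{1,2},…,{2n−1,2n}})^{1/2}`,
defined (meaningfully) on `n`-admissible pairs. -/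
noncomputable def comp {n : ℕ} (α β : NCP n) : NCP n :=
  nroot 2 n (ncSup (shuffle2 α.1 β.1) (intervalSetoid 2 n))

open Classical in
/-- The Kreweras complement: the unique `γ` with `(α, γ)` admissible and
`α ∘ γ = 1_n`. -/
noncomputable def kreweras {n : ℕ} (α : NCP n) : NCP n :=
  if h : ∃ γ : NCP n, Admissible2 α γ ∧ comp α γ = ⊤ then h.choose else ⊥

open Classical in
/-- The relative Kreweras complement `K_β(α)`: the unique `γ` with `(α, γ)`
admissible and `α ∘ γ = β`. -/
noncomputable def relKreweras {n : ℕ} (β α : NCP n) : NCP n :=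
  if h : ∃ γ : NCP n, Admissible2 α γ ∧ comp α γ = β then h.choose else ⊥

/-- Iterated (left-associated) composition product `α_1 ∘ ⋯ ∘ α_k`. -/
noncomputable def compTuple {n : ℕ} : {k : ℕ} → (Fin k → NCP n) → NCP n
  | 0, _ => ⊥
  | k+1, α => comp (compTuple (fun i : Fin k => α i.castSucc)) (α (Fin.last k))

/-- The `k`-fold `n`-perfect shuffle `α_1 ∗_n ⋯ ∗_n α_k` of `k` partitions of `[n]`,
a partition of `[kn]`. -/
def eqShuffle (n k : ℕ) (α : Fin k → Setoid (Fin n)) : Setoid (Fin (k*n)) where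
  r x y := ∃ i : Fin k, ((x:ℕ) % k = (i:ℕ)) ∧ ((y:ℕ) % k = (i:ℕ)) ∧
      (α i) ⟨(x:ℕ)/k, Nat.div_lt_of_lt_mul x.isLt⟩ ⟨(y:ℕ)/k, Nat.div_lt_of_lt_mul y.isLt⟩
  iseqv := by
    constructor
    · intro x
      have h0 : 0 < k * n := lt_of_le_of_lt (Nat.zero_le _) x.isLt
      have hk : 0 < k := by
        rcases Nat.eq_zero_or_pos k with h|h
        · subst h; rw [Nat.zero_mul] at h0; exact absurd h0 (lt_irrefl 0)
        · exact h
      exact ⟨⟨(x:ℕ) % k, Nat.mod_lt _ hk⟩, rfl, rfl, (α _).refl' _⟩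
    · rintro x y ⟨i, h1, h2, h3⟩
      exact ⟨i, h2, h1, (α i).symm' h3⟩
    · rintro x y z ⟨i, h1, h2, h3⟩ ⟨j, h4, h5, h6⟩
      obtain rfl : i = j := Fin.ext (by rw [← h2, h4])
      exact ⟨i, h1, h5, (α i).trans' h3 h6⟩

/-- A `k`-tuple of noncrossing partitions of `[n]` is `n`-admissible if its
`k`-fold perfect shuffle is noncrossing. -/
def AdmissibleTuple (n k : ℕ) (α : Fin k → NCP n) : Prop :=
  IsNoncrossing (eqShuffle n k fun i => (α i).1)

/-- The `n`-perfect shuffle of `α ∈ NCP(2n)` with `β ∈ NCP(n)` (`k = 2`, `l = 1`):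
position `3a+j` (`1 ≤ j ≤ 2`) comes from position `2a+j` of `α` and position
`3a+3` comes from position `a+1` of `β`. -/
def shuffle21 (n : ℕ) (α : Setoid (Fin (2*n))) (β : Setoid (Fin n)) :
    Setoid (Fin (3*n)) :=
  Setoid.comap (fun x : Fin (3*n) =>
    if h : (x:ℕ) % 3 < 2 then
      Sum.inl (⟨((x:ℕ)/3)*2 + (x:ℕ)%3, by have := x.isLt; omega⟩ : Fin (2*n))
    else Sum.inr (⟨(x:ℕ)/3, by have := x.isLt; omega⟩ : Fin n)) (sumSetoid α β)

/-- The `n`-perfect shuffle of `α ∈ NCP(n)` with `β ∈ NCP(2n)` (`k = 1`, `l = 2`):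
position `3a+1` comes from position `a+1` of `α` and position `3a+1+j`
(`1 ≤ j ≤ 2`) comes from position `2a+j` of `β`. -/
def shuffle12 (n : ℕ) (α : Setoid (Fin n)) (β : Setoid (Fin (2*n))) :
    Setoid (Fin (3*n)) :=
  Setoid.comap (fun x : Fin (3*n) =>
    if h : (x:ℕ) % 3 = 0 then
      Sum.inl (⟨(x:ℕ)/3, by have := x.isLt; omega⟩ : Fin n)
    else Sum.inr (⟨((x:ℕ)/3)*2 + ((x:ℕ)%3 - 1), by have := x.isLt; omega⟩ : Fin (2*n)))
    (sumSetoid α β)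

/-- The partition `{{2,3},{5,6},…,{3n−1,3n}}` of `[3n]` (with `1`, `4`, …,
`3n−2` as singletons). -/
def triplePartial (n : ℕ) : Setoid (Fin (3*n)) where
  r x y := x = y ∨ ((x:ℕ)/3 = (y:ℕ)/3 ∧ (x:ℕ)%3 ≠ 0 ∧ (y:ℕ)%3 ≠ 0)
  iseqv := by
    constructor
    · intro x; left; rfl
    · rintro x y (rfl | ⟨h1, h2, h3⟩)
      · left; rfl
      · right; exact ⟨h1.symm, h3, h2⟩
    · rintro x y z (rfl | ⟨h1, h2, h3⟩) h'
      · exact h'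
      · rcases h' with rfl | ⟨h4, h5, h6⟩
        · right; exact ⟨h1, h2, h3⟩
        · right; exact ⟨h1.trans h4, h2, h6⟩

/-! ### Auxiliary lemmas for `interids` -/

section InteridsAux

private lemma sumSetoid_ll {A B : Type*} (α : Setoid A) (β : Setoid B) (a a' : A) :
    sumSetoid α β (Sum.inl a) (Sum.inl a') ↔ α a a' := Iff.rfl

private lemma sumSetoid_rr {A B : Type*} (α : Setoid A) (β : Setoid B) (b b' : B) :
    sumSetoid α β (Sum.inr b) (Sum.inr b') ↔ β b b' := Iff.rfl

private lemma sumSetoid_lr {A B : Type*} (α : Setoid A) (β : Setoid B) (a : A) (b : B) :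
    sumSetoid α β (Sum.inl a) (Sum.inr b) ↔ False := Iff.rfl

private lemma sumSetoid_rl {A B : Type*} (α : Setoid A) (β : Setoid B) (a : A) (b : B) :
    sumSetoid α β (Sum.inr b) (Sum.inl a) ↔ False := Iff.rfl

private lemma rel_of_eq {T : Type*} (γ : Setoid T) {a b : T} (h : a = b) : γ a b :=
  h ▸ γ.refl' a

private lemma powSetoid_rel_iff {p n : ℕ} {γ : Setoid (Fin n)} {x y : Fin (p*n)} {a b : Fin n}
    (hxa : (x:ℕ)/p = (a:ℕ)) (hyb : (y:ℕ)/p = (b:ℕ)) :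
    powSetoid p γ x y ↔ γ a b := by
  obtain ⟨av, hav⟩ := a
  obtain ⟨bv, hbv⟩ := b
  simp only at hxa hyb
  subst hxa hyb
  exact Iff.rfl

private lemma isNoncrossing_of_map {M N : ℕ} (f : Fin M → Fin N) (hf : Monotone f)
    {π : Setoid (Fin M)} {μ : Setoid (Fin N)} (hμ : IsNoncrossing μ)
    (hiff : ∀ x y, π x y ↔ μ (f x) (f y)) : IsNoncrossing π := by
  intro a b c d hab hbc hcd hac hbd
  rw [hiff] at hac hbd ⊢
  have h1 : f a ≤ f b := hf hab.le
  have h2 : f b ≤ f c := hf hbc.le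
  have h3 : f c ≤ f d := hf hcd.le
  rcases eq_or_lt_of_le h1 with e1 | l1
  · rw [← e1]
  · rcases eq_or_lt_of_le h2 with e2 | l2
    · rw [e2]; exact hac
    · rcases eq_or_lt_of_le h3 with e3 | l3
      · rw [← e3] at hbd
        exact μ.trans' hac (μ.symm' hbd)
      · exact hμ _ _ _ _ l1 l2 l3 hac hbd

private lemma le_ncSup_left {N : ℕ} (π μ : Setoid (Fin N)) : π ≤ ncSup π μ :=
  le_sInf fun _ hγ => hγ.2.1

private lemma le_ncSup_right {N : ℕ} (π μ : Setoid (Fin N)) : μ ≤ ncSup π μ :=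
  le_sInf fun _ hγ => hγ.2.2

private lemma ncSup_le' {N : ℕ} {π μ γ : Setoid (Fin N)} (h1 : IsNoncrossing γ)
    (h2 : π ≤ γ) (h3 : μ ≤ γ) : ncSup π μ ≤ γ :=
  sInf_le ⟨h1, h2, h3⟩

private lemma pow_cancel {p n : ℕ} (hp : 0 < p) {π : Setoid (Fin (p*n))}
    (hle : intervalSetoid p n ≤ π) :
    powSetoid p (Setoid.comap
      (fun a : Fin n => (⟨p*(a:ℕ), mul_lt_mul_of_pos_left a.isLt hp⟩ : Fin (p*n))) π) = π := by
  apply Setoid.ext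
  intro x y
  have hkey : ∀ z : Fin (p*n), ∀ hz : p*((z:ℕ)/p) < p*n, π ⟨p*((z:ℕ)/p), hz⟩ z := by
    intro z hz
    exact Setoid.le_def.mp hle
      (show ((⟨p*((z:ℕ)/p), hz⟩ : Fin (p*n)) : ℕ)/p = (z:ℕ)/p from Nat.mul_div_cancel_left _ hp)
  have hx : p*((x:ℕ)/p) < p*n :=
    mul_lt_mul_of_pos_left (Nat.div_lt_of_lt_mul x.isLt) hp
  have hy : p*((y:ℕ)/p) < p*n :=
    mul_lt_mul_of_pos_left (Nat.div_lt_of_lt_mul y.isLt) hp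
  constructor
  · intro hxy
    have hxy' : π ⟨p*((x:ℕ)/p), hx⟩ ⟨p*((y:ℕ)/p), hy⟩ := hxy
    exact π.trans' (π.symm' (hkey x hx)) (π.trans' hxy' (hkey y hy))
  · intro hxy
    show π ⟨p*((x:ℕ)/p), _⟩ ⟨p*((y:ℕ)/p), _⟩
    exact π.trans' (hkey x hx) (π.trans' hxy (π.symm' (hkey y hy)))

private lemma npow_inj {p n : ℕ} (hp : 0 < p) {σ τ : NCP n}
    (h : (npow p σ).1 = (npow p τ).1) : σ = τ := by
  apply Subtype.ext
  apply Setoid.ext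
  intro a b
  have hdiv : ∀ c : Fin n,
      ((⟨p*(c:ℕ), mul_lt_mul_of_pos_left c.isLt hp⟩ : Fin (p*n)) : ℕ)/p = (c:ℕ) :=
    fun c => Nat.mul_div_cancel_left _ hp
  have h00 : powSetoid p σ.1 = powSetoid p τ.1 := h
  constructor
  · intro hab
    have h1 : powSetoid p σ.1 ⟨p*(a:ℕ), mul_lt_mul_of_pos_left a.isLt hp⟩
        ⟨p*(b:ℕ), mul_lt_mul_of_pos_left b.isLt hp⟩ :=
      (powSetoid_rel_iff (hdiv a) (hdiv b)).mpr hab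
    rw [h00] at h1
    exact (powSetoid_rel_iff (hdiv a) (hdiv b)).mp h1
  · intro hab
    have h1 : powSetoid p τ.1 ⟨p*(a:ℕ), mul_lt_mul_of_pos_left a.isLt hp⟩
        ⟨p*(b:ℕ), mul_lt_mul_of_pos_left b.isLt hp⟩ :=
      (powSetoid_rel_iff (hdiv a) (hdiv b)).mpr hab
    rw [← h00] at h1
    exact (powSetoid_rel_iff (hdiv a) (hdiv b)).mp h1

private lemma nroot_npow {p n : ℕ} (hp : 0 < p) (σ : NCP n) :
    nroot p n (npow p σ).1 = σ := by
  have hex : ∃ τ : NCP n, (npow p τ).1 = (npow p σ).1 := ⟨σ, rfl⟩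
  rw [nroot, dif_pos hex]
  exact npow_inj hp hex.choose_spec

private lemma npow_mono {p n : ℕ} {σ τ : NCP n} (h : σ.1 ≤ τ.1) :
    (npow p σ).1 ≤ (npow p τ).1 := by
  rw [Setoid.le_def]
  intro x y hxy
  exact Setoid.le_def.mp h hxy

private lemma ncSup_eq_npow {p n : ℕ} (hp : 0 < p) (π μ : Setoid (Fin (p*n))) (γ : NCP n)
    (h1 : π ≤ (npow p γ).1) (h2 : μ ≤ (npow p γ).1)
    (hint : intervalSetoid p n ≤ ncSup π μ)
    (hmin : ∀ δ : NCP n, π ≤ (npow p δ).1 → γ.1 ≤ δ.1) :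
    ncSup π μ = (npow p γ).1 := by
  have hmono : Monotone (fun a : Fin n =>
      (⟨p*(a:ℕ), mul_lt_mul_of_pos_left a.isLt hp⟩ : Fin (p*n))) := by
    intro a b hab
    simp only [Fin.mk_le_mk]
    exact Nat.mul_le_mul_left p hab
  set σ : NCP n := ⟨Setoid.comap
      (fun a : Fin n => (⟨p*(a:ℕ), mul_lt_mul_of_pos_left a.isLt hp⟩ : Fin (p*n)))
      (ncSup π μ),
    isNoncrossing_comap_of_monotone _ hmono (ncSup_isNoncrossing π μ)⟩ with hσ
  have hs : (npow p σ).1 = ncSup π μ := pow_cancel hp hint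
  apply le_antisymm
  · exact ncSup_le' (powSetoid_isNoncrossing p γ) h1 h2
  · have hπσ : π ≤ (npow p σ).1 := by rw [hs]; exact le_ncSup_left π μ
    have hγσ : γ.1 ≤ σ.1 := hmin σ hπσ
    rw [← hs]
    exact npow_mono hγσ

end InteridsAux

section InteridsAux2

private lemma shuffle2_iff_l {n : ℕ} {A B : Setoid (Fin n)} {x y : Fin (2*n)}
    (hx : (x:ℕ)%2 = 0) (hy : (y:ℕ)%2 = 0) {a b : Fin n}
    (hxa : (x:ℕ)/2 = (a:ℕ)) (hyb : (y:ℕ)/2 = (b:ℕ)) :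
    shuffle2 A B x y ↔ A a b := by
  obtain ⟨av, hav⟩ := a
  obtain ⟨bv, hbv⟩ := b
  simp only at hxa hyb
  subst hxa hyb
  rw [shuffle2, Setoid.comap_rel]
  simp only [decode2]
  rw [if_pos hx, if_pos hy]
  exact Iff.rfl

private lemma shuffle2_iff_r {n : ℕ} {A B : Setoid (Fin n)} {x y : Fin (2*n)}
    (hx : (x:ℕ)%2 = 1) (hy : (y:ℕ)%2 = 1) {a b : Fin n}
    (hxa : (x:ℕ)/2 = (a:ℕ)) (hyb : (y:ℕ)/2 = (b:ℕ)) :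
    shuffle2 A B x y ↔ B a b := by
  obtain ⟨av, hav⟩ := a
  obtain ⟨bv, hbv⟩ := b
  simp only at hxa hyb
  subst hxa hyb
  rw [shuffle2, Setoid.comap_rel]
  simp only [decode2]
  rw [if_neg (by omega), if_neg (by omega)]
  exact Iff.rfl

private lemma shuffle2_not_lr {n : ℕ} {A B : Setoid (Fin n)} {x y : Fin (2*n)}
    (hx : (x:ℕ)%2 = 0) (hy : (y:ℕ)%2 = 1) : ¬ shuffle2 A B x y := by
  rw [shuffle2, Setoid.comap_rel]
  simp only [decode2]
  rw [if_pos hx, if_neg (by omega)]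
  exact fun h => (h : False).elim

private lemma shuffle2_not_rl {n : ℕ} {A B : Setoid (Fin n)} {x y : Fin (2*n)}
    (hx : (x:ℕ)%2 = 1) (hy : (y:ℕ)%2 = 0) : ¬ shuffle2 A B x y := by
  rw [shuffle2, Setoid.comap_rel]
  simp only [decode2]
  rw [if_neg (by omega), if_pos hy]
  exact fun h => (h : False).elim

private lemma shuffle21_iff_l {n : ℕ} {A : Setoid (Fin (2*n))} {B : Setoid (Fin n)}
    {x y : Fin (3*n)} (hx : (x:ℕ)%3 < 2) (hy : (y:ℕ)%3 < 2) {u v : Fin (2*n)}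
    (hxu : (x:ℕ)/3*2 + (x:ℕ)%3 = (u:ℕ)) (hyv : (y:ℕ)/3*2 + (y:ℕ)%3 = (v:ℕ)) :
    shuffle21 n A B x y ↔ A u v := by
  obtain ⟨uv, huv⟩ := u
  obtain ⟨vv, hvv⟩ := v
  simp only at hxu hyv
  subst hxu hyv
  rw [shuffle21, Setoid.comap_rel]
  beta_reduce
  rw [dif_pos hx, dif_pos hy]
  exact Iff.rfl

private lemma shuffle21_iff_r {n : ℕ} {A : Setoid (Fin (2*n))} {B : Setoid (Fin n)}
    {x y : Fin (3*n)} (hx : ¬ (x:ℕ)%3 < 2) (hy : ¬ (y:ℕ)%3 < 2) {a b : Fin n}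
    (hxa : (x:ℕ)/3 = (a:ℕ)) (hyb : (y:ℕ)/3 = (b:ℕ)) :
    shuffle21 n A B x y ↔ B a b := by
  obtain ⟨av, hav⟩ := a
  obtain ⟨bv, hbv⟩ := b
  simp only at hxa hyb
  subst hxa hyb
  rw [shuffle21, Setoid.comap_rel]
  beta_reduce
  rw [dif_neg hx, dif_neg hy]
  exact Iff.rfl

private lemma shuffle21_not_lr {n : ℕ} {A : Setoid (Fin (2*n))} {B : Setoid (Fin n)}
    {x y : Fin (3*n)} (hx : (x:ℕ)%3 < 2) (hy : ¬ (y:ℕ)%3 < 2) :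
    ¬ shuffle21 n A B x y := by
  rw [shuffle21, Setoid.comap_rel]
  beta_reduce
  rw [dif_pos hx, dif_neg hy]
  exact fun h => (h : False).elim

private lemma shuffle21_not_rl {n : ℕ} {A : Setoid (Fin (2*n))} {B : Setoid (Fin n)}
    {x y : Fin (3*n)} (hx : ¬ (x:ℕ)%3 < 2) (hy : (y:ℕ)%3 < 2) :
    ¬ shuffle21 n A B x y := by
  rw [shuffle21, Setoid.comap_rel]
  beta_reduce
  rw [dif_neg hx, dif_pos hy]
  exact fun h => (h : False).elim

private lemma shuffle12_iff_l {n : ℕ} {A : Setoid (Fin n)} {B : Setoid (Fin (2*n))}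
    {x y : Fin (3*n)} (hx : (x:ℕ)%3 = 0) (hy : (y:ℕ)%3 = 0) {a b : Fin n}
    (hxa : (x:ℕ)/3 = (a:ℕ)) (hyb : (y:ℕ)/3 = (b:ℕ)) :
    shuffle12 n A B x y ↔ A a b := by
  obtain ⟨av, hav⟩ := a
  obtain ⟨bv, hbv⟩ := b
  simp only at hxa hyb
  subst hxa hyb
  rw [shuffle12, Setoid.comap_rel]
  beta_reduce
  rw [dif_pos hx, dif_pos hy]
  exact Iff.rfl

private lemma shuffle12_iff_r {n : ℕ} {A : Setoid (Fin n)} {B : Setoid (Fin (2*n))}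
    {x y : Fin (3*n)} (hx : ¬ (x:ℕ)%3 = 0) (hy : ¬ (y:ℕ)%3 = 0) {u v : Fin (2*n)}
    (hxu : (x:ℕ)/3*2 + ((x:ℕ)%3 - 1) = (u:ℕ)) (hyv : (y:ℕ)/3*2 + ((y:ℕ)%3 - 1) = (v:ℕ)) :
    shuffle12 n A B x y ↔ B u v := by
  obtain ⟨uv, huv⟩ := u
  obtain ⟨vv, hvv⟩ := v
  simp only at hxu hyv
  subst hxu hyv
  rw [shuffle12, Setoid.comap_rel]
  beta_reduce
  rw [dif_neg hx, dif_neg hy]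
  exact Iff.rfl

private lemma shuffle12_not_lr {n : ℕ} {A : Setoid (Fin n)} {B : Setoid (Fin (2*n))}
    {x y : Fin (3*n)} (hx : (x:ℕ)%3 = 0) (hy : ¬ (y:ℕ)%3 = 0) :
    ¬ shuffle12 n A B x y := by
  rw [shuffle12, Setoid.comap_rel]
  beta_reduce
  rw [dif_pos hx, dif_neg hy]
  exact fun h => (h : False).elim

private lemma shuffle12_not_rl {n : ℕ} {A : Setoid (Fin n)} {B : Setoid (Fin (2*n))}
    {x y : Fin (3*n)} (hx : ¬ (x:ℕ)%3 = 0) (hy : (y:ℕ)%3 = 0) :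
    ¬ shuffle12 n A B x y := by
  rw [shuffle12, Setoid.comap_rel]
  beta_reduce
  rw [dif_neg hx, dif_pos hy]
  exact fun h => (h : False).elim

private lemma triplePartial_rel {n : ℕ} (x y : Fin (3*n)) :
    triplePartial n x y ↔
      (x = y ∨ ((x:ℕ)/3 = (y:ℕ)/3 ∧ (x:ℕ)%3 ≠ 0 ∧ (y:ℕ)%3 ≠ 0)) := Iff.rfl

private lemma intervalSetoid_rel {p n : ℕ} (x y : Fin (p*n)) :
    intervalSetoid p n x y ↔ (x:ℕ)/p = (y:ℕ)/p := Iff.rfl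

end InteridsAux2

/-- For an `n`-admissible pair `(α, β)` in `NCP(n)`, the
shuffles `α² ∗_n β` and `α ∗_n β²` are noncrossing partitions of `[3n]`, and
`α ∘ β` equals each of the four bracketed expressions of Lemma `interids`. -/
theorem interids (n : ℕ) (α β : NCP n) (h : Admissible2 α β) :
    IsNoncrossing (shuffle21 n (npow 2 α).1 β.1) ∧
    IsNoncrossing (shuffle12 n α.1 (npow 2 β).1) ∧
    comp α β = nroot 2 n (ncSup (shuffle2 α.1 β.1) (intervalSetoid 2 n)) ∧
    comp α β = nroot 3 n (ncSup (shuffle21 n (npow 2 α).1 β.1) (intervalSetoid 3 n)) ∧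
    comp α β = nroot 3 n (ncSup (shuffle21 n (npow 2 α).1 β.1) (triplePartial n)) ∧
    comp α β = nroot 3 n (ncSup (shuffle12 n α.1 (npow 2 β).1) (intervalSetoid 3 n)) := by
  have h2p : (0:ℕ) < 2 := by norm_num
  have h3p : (0:ℕ) < 3 := by norm_num
  have hNC : IsNoncrossing (shuffle2 α.1 β.1) := h
  set γ : NCP n := α ⊔ β with hγdef
  have hαγ : α.1 ≤ γ.1 := (le_sup_left : α ≤ α ⊔ β)
  have hβγ : β.1 ≤ γ.1 := (le_sup_right : β ≤ α ⊔ β)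
  -- shuffle2 is below npow 2 δ whenever α, β are below δ
  have sh2_le : ∀ δ : NCP n, α.1 ≤ δ.1 → β.1 ≤ δ.1 → shuffle2 α.1 β.1 ≤ (npow 2 δ).1 := by
    intro δ hα hβ
    rw [Setoid.le_def]
    intro x y hxy
    have hxn : (x:ℕ)/2 < n := Nat.div_lt_of_lt_mul x.isLt
    have hyn : (y:ℕ)/2 < n := Nat.div_lt_of_lt_mul y.isLt
    show (npow 2 δ).1 x y
    rcases Nat.mod_two_eq_zero_or_one (x:ℕ) with hx | hx <;>
      rcases Nat.mod_two_eq_zero_or_one (y:ℕ) with hy | hy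
    · exact (powSetoid_rel_iff (a := ⟨(x:ℕ)/2, hxn⟩) (b := ⟨(y:ℕ)/2, hyn⟩) rfl rfl).mpr
        (Setoid.le_def.mp hα ((shuffle2_iff_l hx hy rfl rfl).mp hxy))
    · exact absurd hxy (shuffle2_not_lr hx hy)
    · exact absurd hxy (shuffle2_not_rl hx hy)
    · exact (powSetoid_rel_iff (a := ⟨(x:ℕ)/2, hxn⟩) (b := ⟨(y:ℕ)/2, hyn⟩) rfl rfl).mpr
        (Setoid.le_def.mp hβ ((shuffle2_iff_r hx hy rfl rfl).mp hxy))
  -- intervals are below powers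
  have int_le : ∀ (p : ℕ), 0 < p → ∀ δ : NCP n, intervalSetoid p n ≤ (npow p δ).1 := by
    intro p hp δ
    rw [Setoid.le_def]
    intro x y hxy
    have hxn : (x:ℕ)/p < n := Nat.div_lt_of_lt_mul x.isLt
    have hyn : (y:ℕ)/p < n := Nat.div_lt_of_lt_mul y.isLt
    have hxy' : (x:ℕ)/p = (y:ℕ)/p := hxy
    exact (powSetoid_rel_iff (a := ⟨(x:ℕ)/p, hxn⟩) (b := ⟨(y:ℕ)/p, hyn⟩) rfl rfl).mpr
      (rel_of_eq δ.1 (Fin.ext hxy'))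
  -- triplePartial is below npow 3 δ
  have triple_le : ∀ δ : NCP n, triplePartial n ≤ (npow 3 δ).1 := by
    intro δ
    rw [Setoid.le_def]
    intro x y hxy
    have hxn : (x:ℕ)/3 < n := Nat.div_lt_of_lt_mul x.isLt
    have hyn : (y:ℕ)/3 < n := Nat.div_lt_of_lt_mul y.isLt
    rcases (triplePartial_rel x y).mp hxy with rfl | ⟨h1, _, _⟩
    · exact (npow 3 δ).1.refl' x
    · exact (powSetoid_rel_iff (a := ⟨(x:ℕ)/3, hxn⟩) (b := ⟨(y:ℕ)/3, hyn⟩) rfl rfl).mpr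
        (rel_of_eq δ.1 (Fin.ext h1))
  -- minimality for shuffle2
  have hmin2 : ∀ δ : NCP n, shuffle2 α.1 β.1 ≤ (npow 2 δ).1 → γ.1 ≤ δ.1 := by
    intro δ hδ
    have hα : α.1 ≤ δ.1 := by
      rw [Setoid.le_def]
      intro a b hab
      have ha := a.isLt
      have hb := b.isLt
      have h1 : shuffle2 α.1 β.1 ⟨2*(a:ℕ), by omega⟩ ⟨2*(b:ℕ), by omega⟩ :=
        (shuffle2_iff_l (show (2*(a:ℕ))%2 = 0 by omega) (show (2*(b:ℕ))%2 = 0 by omega)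
          (a := a) (b := b)
          (show (2*(a:ℕ))/2 = (a:ℕ) by omega) (show (2*(b:ℕ))/2 = (b:ℕ) by omega)).mpr hab
      exact (powSetoid_rel_iff (a := a) (b := b)
        (show (2*(a:ℕ))/2 = (a:ℕ) by omega) (show (2*(b:ℕ))/2 = (b:ℕ) by omega)).mp
        (Setoid.le_def.mp hδ h1)
    have hβ : β.1 ≤ δ.1 := by
      rw [Setoid.le_def]
      intro a b hab
      have ha := a.isLt
      have hb := b.isLt
      have h1 : shuffle2 α.1 β.1 ⟨2*(a:ℕ)+1, by omega⟩ ⟨2*(b:ℕ)+1, by omega⟩ :=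
        (shuffle2_iff_r (show (2*(a:ℕ)+1)%2 = 1 by omega) (show (2*(b:ℕ)+1)%2 = 1 by omega)
          (a := a) (b := b)
          (show (2*(a:ℕ)+1)/2 = (a:ℕ) by omega) (show (2*(b:ℕ)+1)/2 = (b:ℕ) by omega)).mpr hab
      exact (powSetoid_rel_iff (a := a) (b := b)
        (show (2*(a:ℕ)+1)/2 = (a:ℕ) by omega) (show (2*(b:ℕ)+1)/2 = (b:ℕ) by omega)).mp
        (Setoid.le_def.mp hδ h1)
    exact (sup_le (show α ≤ δ from hα) (show β ≤ δ from hβ) : α ⊔ β ≤ δ)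
  -- shuffle21 is below npow 3 δ whenever α, β are below δ
  have sh21_le : ∀ δ : NCP n, α.1 ≤ δ.1 → β.1 ≤ δ.1 →
      shuffle21 n (npow 2 α).1 β.1 ≤ (npow 3 δ).1 := by
    intro δ hα hβ
    rw [Setoid.le_def]
    intro x y hxy
    have hx3 := x.isLt
    have hy3 := y.isLt
    have hxn : (x:ℕ)/3 < n := by omega
    have hyn : (y:ℕ)/3 < n := by omega
    show (npow 3 δ).1 x y
    by_cases hx : (x:ℕ)%3 < 2 <;> by_cases hy : (y:ℕ)%3 < 2
    · have h1 := (shuffle21_iff_l hx hy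
        (u := ⟨(x:ℕ)/3*2 + (x:ℕ)%3, by omega⟩) (v := ⟨(y:ℕ)/3*2 + (y:ℕ)%3, by omega⟩)
        rfl rfl).mp hxy
      have h2 : α.1 ⟨(x:ℕ)/3, hxn⟩ ⟨(y:ℕ)/3, hyn⟩ :=
        (powSetoid_rel_iff (show ((x:ℕ)/3*2 + (x:ℕ)%3)/2 = (x:ℕ)/3 by omega)
          (show ((y:ℕ)/3*2 + (y:ℕ)%3)/2 = (y:ℕ)/3 by omega)).mp h1
      exact (powSetoid_rel_iff (a := ⟨(x:ℕ)/3, hxn⟩) (b := ⟨(y:ℕ)/3, hyn⟩) rfl rfl).mpr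
        (Setoid.le_def.mp hα h2)
    · exact absurd hxy (shuffle21_not_lr hx hy)
    · exact absurd hxy (shuffle21_not_rl hx hy)
    · have h1 := (shuffle21_iff_r hx hy (a := ⟨(x:ℕ)/3, hxn⟩) (b := ⟨(y:ℕ)/3, hyn⟩)
        rfl rfl).mp hxy
      exact (powSetoid_rel_iff (a := ⟨(x:ℕ)/3, hxn⟩) (b := ⟨(y:ℕ)/3, hyn⟩) rfl rfl).mpr
        (Setoid.le_def.mp hβ h1)
  -- minimality for shuffle21
  have hmin21 : ∀ δ : NCP n, shuffle21 n (npow 2 α).1 β.1 ≤ (npow 3 δ).1 → γ.1 ≤ δ.1 := by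
    intro δ hδ
    have hα : α.1 ≤ δ.1 := by
      rw [Setoid.le_def]
      intro a b hab
      have ha := a.isLt
      have hb := b.isLt
      have h1 : shuffle21 n (npow 2 α).1 β.1 ⟨3*(a:ℕ), by omega⟩ ⟨3*(b:ℕ), by omega⟩ :=
        (shuffle21_iff_l (show (3*(a:ℕ))%3 < 2 by omega) (show (3*(b:ℕ))%3 < 2 by omega)
          (u := ⟨2*(a:ℕ), by omega⟩) (v := ⟨2*(b:ℕ), by omega⟩)
          (show (3*(a:ℕ))/3*2 + (3*(a:ℕ))%3 = 2*(a:ℕ) by omega)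
          (show (3*(b:ℕ))/3*2 + (3*(b:ℕ))%3 = 2*(b:ℕ) by omega)).mpr
          ((powSetoid_rel_iff (a := a) (b := b)
            (show (2*(a:ℕ))/2 = (a:ℕ) by omega) (show (2*(b:ℕ))/2 = (b:ℕ) by omega)).mpr hab)
      exact (powSetoid_rel_iff (a := a) (b := b)
        (show (3*(a:ℕ))/3 = (a:ℕ) by omega) (show (3*(b:ℕ))/3 = (b:ℕ) by omega)).mp
        (Setoid.le_def.mp hδ h1)
    have hβ : β.1 ≤ δ.1 := by
      rw [Setoid.le_def]
      intro a b hab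
      have ha := a.isLt
      have hb := b.isLt
      have h1 : shuffle21 n (npow 2 α).1 β.1 ⟨3*(a:ℕ)+2, by omega⟩ ⟨3*(b:ℕ)+2, by omega⟩ :=
        (shuffle21_iff_r (show ¬ (3*(a:ℕ)+2)%3 < 2 by omega)
          (show ¬ (3*(b:ℕ)+2)%3 < 2 by omega) (a := a) (b := b)
          (show (3*(a:ℕ)+2)/3 = (a:ℕ) by omega) (show (3*(b:ℕ)+2)/3 = (b:ℕ) by omega)).mpr hab
      exact (powSetoid_rel_iff (a := a) (b := b)
        (show (3*(a:ℕ)+2)/3 = (a:ℕ) by omega) (show (3*(b:ℕ)+2)/3 = (b:ℕ) by omega)).mp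
        (Setoid.le_def.mp hδ h1)
    exact (sup_le (show α ≤ δ from hα) (show β ≤ δ from hβ) : α ⊔ β ≤ δ)
  -- shuffle12 is below npow 3 δ whenever α, β are below δ
  have sh12_le : ∀ δ : NCP n, α.1 ≤ δ.1 → β.1 ≤ δ.1 →
      shuffle12 n α.1 (npow 2 β).1 ≤ (npow 3 δ).1 := by
    intro δ hα hβ
    rw [Setoid.le_def]
    intro x y hxy
    have hx3 := x.isLt
    have hy3 := y.isLt
    have hxn : (x:ℕ)/3 < n := by omega
    have hyn : (y:ℕ)/3 < n := by omega
    show (npow 3 δ).1 x y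
    by_cases hx : (x:ℕ)%3 = 0 <;> by_cases hy : (y:ℕ)%3 = 0
    · have h1 := (shuffle12_iff_l hx hy (a := ⟨(x:ℕ)/3, hxn⟩) (b := ⟨(y:ℕ)/3, hyn⟩)
        rfl rfl).mp hxy
      exact (powSetoid_rel_iff (a := ⟨(x:ℕ)/3, hxn⟩) (b := ⟨(y:ℕ)/3, hyn⟩) rfl rfl).mpr
        (Setoid.le_def.mp hα h1)
    · exact absurd hxy (shuffle12_not_lr hx hy)
    · exact absurd hxy (shuffle12_not_rl hx hy)
    · have h1 := (shuffle12_iff_r hx hy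
        (u := ⟨(x:ℕ)/3*2 + ((x:ℕ)%3 - 1), by omega⟩)
        (v := ⟨(y:ℕ)/3*2 + ((y:ℕ)%3 - 1), by omega⟩) rfl rfl).mp hxy
      have h2 : β.1 ⟨(x:ℕ)/3, hxn⟩ ⟨(y:ℕ)/3, hyn⟩ :=
        (powSetoid_rel_iff (show ((x:ℕ)/3*2 + ((x:ℕ)%3 - 1))/2 = (x:ℕ)/3 by omega)
          (show ((y:ℕ)/3*2 + ((y:ℕ)%3 - 1))/2 = (y:ℕ)/3 by omega)).mp h1
      exact (powSetoid_rel_iff (a := ⟨(x:ℕ)/3, hxn⟩) (b := ⟨(y:ℕ)/3, hyn⟩) rfl rfl).mpr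
        (Setoid.le_def.mp hβ h2)
  -- minimality for shuffle12
  have hmin12 : ∀ δ : NCP n, shuffle12 n α.1 (npow 2 β).1 ≤ (npow 3 δ).1 → γ.1 ≤ δ.1 := by
    intro δ hδ
    have hα : α.1 ≤ δ.1 := by
      rw [Setoid.le_def]
      intro a b hab
      have ha := a.isLt
      have hb := b.isLt
      have h1 : shuffle12 n α.1 (npow 2 β).1 ⟨3*(a:ℕ), by omega⟩ ⟨3*(b:ℕ), by omega⟩ :=
        (shuffle12_iff_l (show (3*(a:ℕ))%3 = 0 by omega) (show (3*(b:ℕ))%3 = 0 by omega)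
          (a := a) (b := b)
          (show (3*(a:ℕ))/3 = (a:ℕ) by omega) (show (3*(b:ℕ))/3 = (b:ℕ) by omega)).mpr hab
      exact (powSetoid_rel_iff (a := a) (b := b)
        (show (3*(a:ℕ))/3 = (a:ℕ) by omega) (show (3*(b:ℕ))/3 = (b:ℕ) by omega)).mp
        (Setoid.le_def.mp hδ h1)
    have hβ : β.1 ≤ δ.1 := by
      rw [Setoid.le_def]
      intro a b hab
      have ha := a.isLt
      have hb := b.isLt
      have h1 : shuffle12 n α.1 (npow 2 β).1 ⟨3*(a:ℕ)+1, by omega⟩ ⟨3*(b:ℕ)+1, by omega⟩ :=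
        (shuffle12_iff_r (show ¬ (3*(a:ℕ)+1)%3 = 0 by omega)
          (show ¬ (3*(b:ℕ)+1)%3 = 0 by omega)
          (u := ⟨2*(a:ℕ), by omega⟩) (v := ⟨2*(b:ℕ), by omega⟩)
          (show (3*(a:ℕ)+1)/3*2 + ((3*(a:ℕ)+1)%3 - 1) = 2*(a:ℕ) by omega)
          (show (3*(b:ℕ)+1)/3*2 + ((3*(b:ℕ)+1)%3 - 1) = 2*(b:ℕ) by omega)).mpr
          ((powSetoid_rel_iff (a := a) (b := b)
            (show (2*(a:ℕ))/2 = (a:ℕ) by omega) (show (2*(b:ℕ))/2 = (b:ℕ) by omega)).mpr hab)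
      exact (powSetoid_rel_iff (a := a) (b := b)
        (show (3*(a:ℕ)+1)/3 = (a:ℕ) by omega) (show (3*(b:ℕ)+1)/3 = (b:ℕ) by omega)).mp
        (Setoid.le_def.mp hδ h1)
    exact (sup_le (show α ≤ δ from hα) (show β ≤ δ from hβ) : α ⊔ β ≤ δ)
  -- the interval partition is below the ncSup with triplePartial
  have hintC : intervalSetoid 3 n ≤ ncSup (shuffle21 n (npow 2 α).1 β.1) (triplePartial n) := by
    set S := ncSup (shuffle21 n (npow 2 α).1 β.1) (triplePartial n) with hS
    have hsh : ∀ {x y : Fin (3*n)}, shuffle21 n (npow 2 α).1 β.1 x y → S x y :=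
      fun hxy => Setoid.le_def.mp (le_ncSup_left _ _) hxy
    have htr : ∀ {x y : Fin (3*n)}, triplePartial n x y → S x y :=
      fun hxy => Setoid.le_def.mp (le_ncSup_right _ _) hxy
    have claim : ∀ (x : Fin (3*n)) (hb : 3*((x:ℕ)/3) < 3*n), S x ⟨3*((x:ℕ)/3), hb⟩ := by
      intro x hb
      have hx3 := x.isLt
      have hbase : (x:ℕ)/3 < n := by omega
      have step : ∀ (z : Fin (3*n)), (z:ℕ)%3 = 1 → ∀ hz : (z:ℕ) - 1 < 3*n,
          shuffle21 n (npow 2 α).1 β.1 z ⟨(z:ℕ) - 1, hz⟩ := by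
        intro z hz1 hz
        have hz3 := z.isLt
        have hzn : (z:ℕ)/3 < n := by omega
        exact (shuffle21_iff_l (show (z:ℕ)%3 < 2 by omega)
          (show ((z:ℕ)-1)%3 < 2 by omega)
          (u := ⟨(z:ℕ)/3*2 + 1, by omega⟩) (v := ⟨(z:ℕ)/3*2, by omega⟩)
          (show (z:ℕ)/3*2 + (z:ℕ)%3 = (z:ℕ)/3*2 + 1 by omega)
          (show ((z:ℕ)-1)/3*2 + ((z:ℕ)-1)%3 = (z:ℕ)/3*2 by omega)).mpr
          ((powSetoid_rel_iff (a := ⟨(z:ℕ)/3, hzn⟩) (b := ⟨(z:ℕ)/3, hzn⟩)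
            (show ((z:ℕ)/3*2 + 1)/2 = (z:ℕ)/3 by omega)
            (show ((z:ℕ)/3*2)/2 = (z:ℕ)/3 by omega)).mpr (α.1.refl' _))
      rcases (show (x:ℕ)%3 = 0 ∨ (x:ℕ)%3 = 1 ∨ (x:ℕ)%3 = 2 by omega) with h0 | h1 | h2
      · exact rel_of_eq S (Fin.ext (show (x:ℕ) = 3*((x:ℕ)/3) by omega))
      · have := hsh (step x h1 (by omega))
        have e : (⟨(x:ℕ) - 1, by omega⟩ : Fin (3*n)) = ⟨3*((x:ℕ)/3), hb⟩ :=
          Fin.ext (show (x:ℕ) - 1 = 3*((x:ℕ)/3) by omega)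
        exact e ▸ this
      · have m1 : S x ⟨3*((x:ℕ)/3)+1, by omega⟩ := htr ((triplePartial_rel _ _).mpr
          (Or.inr ⟨show (x:ℕ)/3 = (3*((x:ℕ)/3)+1)/3 by omega,
            show (x:ℕ)%3 ≠ 0 by omega, show (3*((x:ℕ)/3)+1)%3 ≠ 0 by omega⟩))
        have m2 := hsh (step ⟨3*((x:ℕ)/3)+1, by omega⟩
          (show (3*((x:ℕ)/3)+1)%3 = 1 by omega) (by simp only [Fin.val_mk]; omega))
        have e : (⟨(3*((x:ℕ)/3)+1) - 1, by omega⟩ : Fin (3*n)) = ⟨3*((x:ℕ)/3), hb⟩ :=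
          Fin.ext (show (3*((x:ℕ)/3)+1) - 1 = 3*((x:ℕ)/3) by omega)
        exact S.trans' m1 (e ▸ m2)
    rw [Setoid.le_def]
    intro x y hxy
    have hxy' : (x:ℕ)/3 = (y:ℕ)/3 := hxy
    have hx' : 3*((x:ℕ)/3) < 3*n := by have := x.isLt; omega
    have hy' : 3*((y:ℕ)/3) < 3*n := by have := y.isLt; omega
    have h1 := claim x hx'
    have h2 := claim y hy'
    have e : (⟨3*((y:ℕ)/3), hy'⟩ : Fin (3*n)) = ⟨3*((x:ℕ)/3), hx'⟩ :=
      Fin.ext (show 3*((y:ℕ)/3) = 3*((x:ℕ)/3) by omega)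
    exact S.trans' h1 (S.symm' (e ▸ h2))
  -- the four ncSup computations
  have bigA : ncSup (shuffle2 α.1 β.1) (intervalSetoid 2 n) = (npow 2 γ).1 :=
    ncSup_eq_npow h2p _ _ γ (sh2_le γ hαγ hβγ) (int_le 2 h2p γ) (le_ncSup_right _ _) hmin2
  have bigB : ncSup (shuffle21 n (npow 2 α).1 β.1) (intervalSetoid 3 n) = (npow 3 γ).1 :=
    ncSup_eq_npow h3p _ _ γ (sh21_le γ hαγ hβγ) (int_le 3 h3p γ) (le_ncSup_right _ _) hmin21
  have bigC : ncSup (shuffle21 n (npow 2 α).1 β.1) (triplePartial n) = (npow 3 γ).1 :=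
    ncSup_eq_npow h3p _ _ γ (sh21_le γ hαγ hβγ) (triple_le γ) hintC hmin21
  have bigD : ncSup (shuffle12 n α.1 (npow 2 β).1) (intervalSetoid 3 n) = (npow 3 γ).1 :=
    ncSup_eq_npow h3p _ _ γ (sh12_le γ hαγ hβγ) (int_le 3 h3p γ) (le_ncSup_right _ _) hmin12
  have hcomp : comp α β = γ := by
    show nroot 2 n (ncSup (shuffle2 α.1 β.1) (intervalSetoid 2 n)) = γ
    rw [bigA]
    exact nroot_npow h2p γ
  -- noncrossingness of the two 3n-shuffles
  have g1 : IsNoncrossing (shuffle21 n (npow 2 α).1 β.1) := by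
    have hf : Monotone (fun x : Fin (3*n) =>
        (⟨2*((x:ℕ)/3) + (if (x:ℕ)%3 = 2 then 1 else 0),
          by have := x.isLt; split <;> omega⟩ : Fin (2*n))) := by
      intro x y hxy
      have hxy' : (x:ℕ) ≤ (y:ℕ) := hxy
      simp only [Fin.mk_le_mk]
      split <;> split <;> omega
    refine isNoncrossing_of_map _ hf hNC ?_
    intro x y
    have hx3 := x.isLt
    have hy3 := y.isLt
    have hxn : (x:ℕ)/3 < n := by omega
    have hyn : (y:ℕ)/3 < n := by omega
    by_cases hx : (x:ℕ)%3 < 2 <;> by_cases hy : (y:ℕ)%3 < 2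
    · refine Iff.trans (Iff.trans (shuffle21_iff_l hx hy
        (u := ⟨(x:ℕ)/3*2 + (x:ℕ)%3, by omega⟩) (v := ⟨(y:ℕ)/3*2 + (y:ℕ)%3, by omega⟩) rfl rfl)
        (powSetoid_rel_iff (a := ⟨(x:ℕ)/3, hxn⟩) (b := ⟨(y:ℕ)/3, hyn⟩)
          (show ((x:ℕ)/3*2 + (x:ℕ)%3)/2 = (x:ℕ)/3 by omega)
          (show ((y:ℕ)/3*2 + (y:ℕ)%3)/2 = (y:ℕ)/3 by omega)))
        (shuffle2_iff_l
          (show (2*((x:ℕ)/3) + (if (x:ℕ)%3 = 2 then 1 else 0))%2 = 0 by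
            rw [if_neg (show ¬ (x:ℕ)%3 = 2 by omega)]; omega)
          (show (2*((y:ℕ)/3) + (if (y:ℕ)%3 = 2 then 1 else 0))%2 = 0 by
            rw [if_neg (show ¬ (y:ℕ)%3 = 2 by omega)]; omega)
          (show (2*((x:ℕ)/3) + (if (x:ℕ)%3 = 2 then 1 else 0))/2 = (x:ℕ)/3 by
            rw [if_neg (show ¬ (x:ℕ)%3 = 2 by omega)]; omega)
          (show (2*((y:ℕ)/3) + (if (y:ℕ)%3 = 2 then 1 else 0))/2 = (y:ℕ)/3 by
            rw [if_neg (show ¬ (y:ℕ)%3 = 2 by omega)]; omega)).symm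
    · exact iff_of_false (shuffle21_not_lr hx hy)
        (shuffle2_not_lr
          (show (2*((x:ℕ)/3) + (if (x:ℕ)%3 = 2 then 1 else 0))%2 = 0 by
            rw [if_neg (show ¬ (x:ℕ)%3 = 2 by omega)]; omega)
          (show (2*((y:ℕ)/3) + (if (y:ℕ)%3 = 2 then 1 else 0))%2 = 1 by
            rw [if_pos (show (y:ℕ)%3 = 2 by omega)]; omega))
    · exact iff_of_false (shuffle21_not_rl hx hy)
        (shuffle2_not_rl
          (show (2*((x:ℕ)/3) + (if (x:ℕ)%3 = 2 then 1 else 0))%2 = 1 by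
            rw [if_pos (show (x:ℕ)%3 = 2 by omega)]; omega)
          (show (2*((y:ℕ)/3) + (if (y:ℕ)%3 = 2 then 1 else 0))%2 = 0 by
            rw [if_neg (show ¬ (y:ℕ)%3 = 2 by omega)]; omega))
    · refine Iff.trans (shuffle21_iff_r hx hy (a := ⟨(x:ℕ)/3, hxn⟩) (b := ⟨(y:ℕ)/3, hyn⟩) rfl rfl)
        (shuffle2_iff_r
          (show (2*((x:ℕ)/3) + (if (x:ℕ)%3 = 2 then 1 else 0))%2 = 1 by
            rw [if_pos (show (x:ℕ)%3 = 2 by omega)]; omega)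
          (show (2*((y:ℕ)/3) + (if (y:ℕ)%3 = 2 then 1 else 0))%2 = 1 by
            rw [if_pos (show (y:ℕ)%3 = 2 by omega)]; omega)
          (show (2*((x:ℕ)/3) + (if (x:ℕ)%3 = 2 then 1 else 0))/2 = (x:ℕ)/3 by
            rw [if_pos (show (x:ℕ)%3 = 2 by omega)]; omega)
          (show (2*((y:ℕ)/3) + (if (y:ℕ)%3 = 2 then 1 else 0))/2 = (y:ℕ)/3 by
            rw [if_pos (show (y:ℕ)%3 = 2 by omega)]; omega)).symm
  have g2 : IsNoncrossing (shuffle12 n α.1 (npow 2 β).1) := by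
    have hf : Monotone (fun x : Fin (3*n) =>
        (⟨2*((x:ℕ)/3) + (if (x:ℕ)%3 = 0 then 0 else 1),
          by have := x.isLt; split <;> omega⟩ : Fin (2*n))) := by
      intro x y hxy
      have hxy' : (x:ℕ) ≤ (y:ℕ) := hxy
      simp only [Fin.mk_le_mk]
      split <;> split <;> omega
    refine isNoncrossing_of_map _ hf hNC ?_
    intro x y
    have hx3 := x.isLt
    have hy3 := y.isLt
    have hxn : (x:ℕ)/3 < n := by omega
    have hyn : (y:ℕ)/3 < n := by omega
    by_cases hx : (x:ℕ)%3 = 0 <;> by_cases hy : (y:ℕ)%3 = 0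
    · refine Iff.trans (shuffle12_iff_l hx hy (a := ⟨(x:ℕ)/3, hxn⟩) (b := ⟨(y:ℕ)/3, hyn⟩) rfl rfl)
        (shuffle2_iff_l
          (show (2*((x:ℕ)/3) + (if (x:ℕ)%3 = 0 then 0 else 1))%2 = 0 by
            rw [if_pos hx]; omega)
          (show (2*((y:ℕ)/3) + (if (y:ℕ)%3 = 0 then 0 else 1))%2 = 0 by
            rw [if_pos hy]; omega)
          (show (2*((x:ℕ)/3) + (if (x:ℕ)%3 = 0 then 0 else 1))/2 = (x:ℕ)/3 by
            rw [if_pos hx]; omega)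
          (show (2*((y:ℕ)/3) + (if (y:ℕ)%3 = 0 then 0 else 1))/2 = (y:ℕ)/3 by
            rw [if_pos hy]; omega)).symm
    · exact iff_of_false (shuffle12_not_lr hx hy)
        (shuffle2_not_lr
          (show (2*((x:ℕ)/3) + (if (x:ℕ)%3 = 0 then 0 else 1))%2 = 0 by
            rw [if_pos hx]; omega)
          (show (2*((y:ℕ)/3) + (if (y:ℕ)%3 = 0 then 0 else 1))%2 = 1 by
            rw [if_neg hy]; omega))
    · exact iff_of_false (shuffle12_not_rl hx hy)
        (shuffle2_not_rl
          (show (2*((x:ℕ)/3) + (if (x:ℕ)%3 = 0 then 0 else 1))%2 = 1 by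
            rw [if_neg hx]; omega)
          (show (2*((y:ℕ)/3) + (if (y:ℕ)%3 = 0 then 0 else 1))%2 = 0 by
            rw [if_pos hy]; omega))
    · refine Iff.trans (Iff.trans (shuffle12_iff_r hx hy
        (u := ⟨(x:ℕ)/3*2 + ((x:ℕ)%3 - 1), by omega⟩)
        (v := ⟨(y:ℕ)/3*2 + ((y:ℕ)%3 - 1), by omega⟩) rfl rfl)
        (powSetoid_rel_iff (a := ⟨(x:ℕ)/3, hxn⟩) (b := ⟨(y:ℕ)/3, hyn⟩)
          (show ((x:ℕ)/3*2 + ((x:ℕ)%3 - 1))/2 = (x:ℕ)/3 by omega)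
          (show ((y:ℕ)/3*2 + ((y:ℕ)%3 - 1))/2 = (y:ℕ)/3 by omega)))
        (shuffle2_iff_r
          (show (2*((x:ℕ)/3) + (if (x:ℕ)%3 = 0 then 0 else 1))%2 = 1 by
            rw [if_neg hx]; omega)
          (show (2*((y:ℕ)/3) + (if (y:ℕ)%3 = 0 then 0 else 1))%2 = 1 by
            rw [if_neg hy]; omega)
          (show (2*((x:ℕ)/3) + (if (x:ℕ)%3 = 0 then 0 else 1))/2 = (x:ℕ)/3 by
            rw [if_neg hx]; omega)
          (show (2*((y:ℕ)/3) + (if (y:ℕ)%3 = 0 then 0 else 1))/2 = (y:ℕ)/3 by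
            rw [if_neg hy]; omega)).symm
  refine ⟨g1, g2, rfl, ?_, ?_, ?_⟩
  · rw [hcomp, bigB, nroot_npow h3p]
  · rw [hcomp, bigC, nroot_npow h3p]
  · rw [hcomp, bigD, nroot_npow h3p]
end

section
/- For every α ∈ NCP(n) there exists a unique noncrossing partition K(α) ∈ NCP(n) such that the pair (α, K(α)) is n-admissible and α ∘ K(α) = 1_n. -/
open scoped BigOperators

/-! ### Auxiliary development for the Kreweras complement -/

section KrewerasAux

variable {n : ℕ}

/-- The interval `(i, j]` (as a set of values of `Fin n`) is closed under `A`. -/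
def Cln (A : Setoid (Fin n)) (i j : ℕ) : Prop :=
  ∀ x y : Fin n, i < (x : ℕ) → (x : ℕ) ≤ j → A x y → (i < (y : ℕ) ∧ (y : ℕ) ≤ j)

theorem cln_empty (A : Setoid (Fin n)) (a : ℕ) : Cln A a a := by
  intro x y h1 h2 _; omega

theorem cln_union {A : Setoid (Fin n)} {i j k : ℕ} (hij : i ≤ j) (hjk : j ≤ k)
    (h1 : Cln A i j) (h2 : Cln A j k) : Cln A i k := by
  intro x y hx1 hx2 hxy
  by_cases h : (x : ℕ) ≤ j
  · have := h1 x y hx1 h hxy; omega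
  · have := h2 x y (by omega) hx2 hxy; omega

theorem cln_diffL {A : Setoid (Fin n)} {i j k : ℕ} (hij : i ≤ j) (hjk : j ≤ k)
    (h1 : Cln A i j) (h2 : Cln A i k) : Cln A j k := by
  intro x y hx1 hx2 hxy
  have hy := h2 x y (by omega) hx2 hxy
  refine ⟨?_, hy.2⟩
  by_contra h
  have := h1 y x (by omega) (by omega) (A.symm' hxy)
  omega

theorem cln_diffR {A : Setoid (Fin n)} {i j k : ℕ} (hij : i ≤ j) (hjk : j ≤ k)
    (h1 : Cln A j k) (h2 : Cln A i k) : Cln A i j := by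
  intro x y hx1 hx2 hxy
  have hy := h2 x y hx1 (by omega) hxy
  refine ⟨hy.1, ?_⟩
  by_contra h
  have := h1 y x (by omega) (by omega) (A.symm' hxy)
  omega

/-- The Kreweras complement of `A`: `i ~ j` iff the interval between them is a
union of `A`-blocks. -/
def kSetoid (A : Setoid (Fin n)) : Setoid (Fin n) where
  r i j := Cln A (min (i : ℕ) (j : ℕ)) (max (i : ℕ) (j : ℕ))
  iseqv := by
    constructor
    · intro x
      simp only [min_self, max_self]
      exact cln_empty A _
    · intro x y h
      rwa [min_comm, max_comm]
    · intro x y z hab hbc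
      set a := (x : ℕ); set b := (y : ℕ); set c := (z : ℕ)
      rcases le_total a b with h1 | h1 <;> rcases le_total b c with h2 | h2 <;>
        rcases le_total a c with h3 | h3
      · rw [min_eq_left h1, max_eq_right h1] at hab
        rw [min_eq_left h2, max_eq_right h2] at hbc
        rw [min_eq_left h3, max_eq_right h3]
        exact cln_union h1 h2 hab hbc
      · have hac : a = c := by omega
        rw [hac, min_self, max_self]; exact cln_empty A _
      · rw [min_eq_left h1, max_eq_right h1] at hab
        rw [min_eq_right h2, max_eq_left h2] at hbc
        rw [min_eq_left h3, max_eq_right h3]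
        exact cln_diffR h3 h2 hbc hab
      · rw [min_eq_left h1, max_eq_right h1] at hab
        rw [min_eq_right h2, max_eq_left h2] at hbc
        rw [min_eq_right h3, max_eq_left h3]
        exact cln_diffR h3 h1 hab hbc
      · rw [min_eq_right h1, max_eq_left h1] at hab
        rw [min_eq_left h2, max_eq_right h2] at hbc
        rw [min_eq_left h3, max_eq_right h3]
        exact cln_diffL h1 h3 hab hbc
      · rw [min_eq_right h1, max_eq_left h1] at hab
        rw [min_eq_left h2, max_eq_right h2] at hbc
        rw [min_eq_right h3, max_eq_left h3]
        exact cln_diffL h2 h3 hbc hab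
      · have hac : a = c := by omega
        rw [hac, min_self, max_self]; exact cln_empty A _
      · rw [min_eq_right h1, max_eq_left h1] at hab
        rw [min_eq_right h2, max_eq_left h2] at hbc
        rw [min_eq_right h3, max_eq_left h3]
        exact cln_union h2 h1 hbc hab

theorem kSetoid_rel (A : Setoid (Fin n)) (i j : Fin n) :
    kSetoid A i j ↔ Cln A (min (i : ℕ) (j : ℕ)) (max (i : ℕ) (j : ℕ)) := Iff.rfl

theorem kSetoid_rel_of_le (A : Setoid (Fin n)) {i j : Fin n} (h : (i : ℕ) ≤ j) :
    kSetoid A i j ↔ Cln A i j := by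
  rw [kSetoid_rel, min_eq_left h, max_eq_right h]

theorem kSetoid_nc {A : Setoid (Fin n)} (hA : IsNoncrossing A) :
    IsNoncrossing (kSetoid A) := by
  intro a b c d hab hbc hcd hac hbd
  have vab : (a : ℕ) < b := hab
  have vbc : (b : ℕ) < c := hbc
  have vcd : (c : ℕ) < d := hcd
  rw [kSetoid_rel_of_le A (by omega)] at hac hbd
  rw [kSetoid_rel_of_le A (by omega)]
  intro x y hx1 hx2 hxy
  have h1 := hac x y hx1 (by omega) hxy
  refine ⟨h1.1, ?_⟩
  by_contra h
  have := hbd y x (by omega) (by omega) (A.symm' hxy)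
  omega
/-- The half of an element of `Fin (2*n)`. -/
def half (x : Fin (2*n)) : Fin n := ⟨(x : ℕ) / 2, by have := x.isLt; omega⟩

theorem decode2_eq_inl {x : Fin (2*n)} (h : (x : ℕ) % 2 = 0) :
    decode2 n x = Sum.inl (half x) := by
  simp only [decode2, h, if_pos]; rfl

theorem decode2_eq_inr {x : Fin (2*n)} (h : (x : ℕ) % 2 = 1) :
    decode2 n x = Sum.inr (half x) := by
  simp only [decode2, h]
  rw [if_neg (by omega)]; rfl

theorem shuffle2_rel_iff (A B : Setoid (Fin n)) (x y : Fin (2*n)) :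
    shuffle2 A B x y ↔
      (((x : ℕ) % 2 = 0 ∧ (y : ℕ) % 2 = 0 ∧ A (half x) (half y)) ∨
       ((x : ℕ) % 2 = 1 ∧ (y : ℕ) % 2 = 1 ∧ B (half x) (half y))) := by
  show sumSetoid A B (decode2 n x) (decode2 n y) ↔ _
  rcases Nat.mod_two_eq_zero_or_one (x : ℕ) with hx | hx <;>
    rcases Nat.mod_two_eq_zero_or_one (y : ℕ) with hy | hy
  · rw [decode2_eq_inl hx, decode2_eq_inl hy]
    constructor
    · intro h; exact Or.inl ⟨hx, hy, h⟩
    · rintro (⟨_, _, h⟩ | ⟨h, _, _⟩)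
      · exact h
      · omega
  · rw [decode2_eq_inl hx, decode2_eq_inr hy]
    constructor
    · intro h; exact h.elim
    · rintro (⟨_, h, _⟩ | ⟨h, _, _⟩) <;> omega
  · rw [decode2_eq_inr hx, decode2_eq_inl hy]
    constructor
    · intro h; exact h.elim
    · rintro (⟨h, _, _⟩ | ⟨_, h, _⟩) <;> omega
  · rw [decode2_eq_inr hx, decode2_eq_inr hy]
    constructor
    · intro h; exact Or.inr ⟨hx, hy, h⟩
    · rintro (⟨h, _, _⟩ | ⟨_, _, h⟩)
      · omega
      · exact h

theorem shuffle2_even {A B : Setoid (Fin n)} {s t : Fin n} (h : A s t) :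
    shuffle2 A B ⟨2*(s:ℕ), by have := s.isLt; omega⟩ ⟨2*(t:ℕ), by have := t.isLt; omega⟩ := by
  rw [shuffle2_rel_iff]
  refine Or.inl ⟨(by omega : 2*(s:ℕ) % 2 = 0), (by omega : 2*(t:ℕ) % 2 = 0), ?_⟩
  have e1 : half (⟨2*(s:ℕ), by have := s.isLt; omega⟩ : Fin (2*n)) = s :=
    Fin.ext (show 2*(s:ℕ)/2 = (s:ℕ) by omega)
  have e2 : half (⟨2*(t:ℕ), by have := t.isLt; omega⟩ : Fin (2*n)) = t :=
    Fin.ext (show 2*(t:ℕ)/2 = (t:ℕ) by omega)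
  rw [e1, e2]; exact h

theorem shuffle2_odd {A B : Setoid (Fin n)} {s t : Fin n} (h : B s t) :
    shuffle2 A B ⟨2*(s:ℕ)+1, by have := s.isLt; omega⟩ ⟨2*(t:ℕ)+1, by have := t.isLt; omega⟩ := by
  rw [shuffle2_rel_iff]
  refine Or.inr ⟨(by omega : (2*(s:ℕ)+1) % 2 = 1), (by omega : (2*(t:ℕ)+1) % 2 = 1), ?_⟩
  have e1 : half (⟨2*(s:ℕ)+1, by have := s.isLt; omega⟩ : Fin (2*n)) = s :=
    Fin.ext (show (2*(s:ℕ)+1)/2 = (s:ℕ) by omega)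
  have e2 : half (⟨2*(t:ℕ)+1, by have := t.isLt; omega⟩ : Fin (2*n)) = t :=
    Fin.ext (show (2*(t:ℕ)+1)/2 = (t:ℕ) by omega)
  rw [e1, e2]; exact h

/-- The pair `(A, K(A))` is admissible. -/
theorem shuffle_k_nc {A : Setoid (Fin n)} (hA : IsNoncrossing A) :
    IsNoncrossing (shuffle2 A (kSetoid A)) := by
  intro a b c d hab hbc hcd hac hbd
  have vab : (a : ℕ) < b := hab
  have vbc : (b : ℕ) < c := hbc
  have vcd : (c : ℕ) < d := hcd
  rw [shuffle2_rel_iff] at hac hbd ⊢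
  rcases hac with ⟨ha, hc, hAac⟩ | ⟨ha, hc, hKac⟩ <;>
    rcases hbd with ⟨hb, hd, hAbd⟩ | ⟨hb, hd, hKbd⟩
  · -- all even : use noncrossing of A
    refine Or.inl ⟨ha, hb, ?_⟩
    refine hA (half a) (half b) (half c) (half d) ?_ ?_ ?_ hAac hAbd
    · show (a : ℕ)/2 < (b : ℕ)/2; omega
    · show (b : ℕ)/2 < (c : ℕ)/2; omega
    · show (c : ℕ)/2 < (d : ℕ)/2; omega
  · -- a,c even; b,d odd : contradiction via closedness
    exfalso
    have hbd2 : ((half b) : ℕ) ≤ (half d : ℕ) := show (b:ℕ)/2 ≤ (d:ℕ)/2 by omega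
    rw [kSetoid_rel_of_le A hbd2] at hKbd
    have h2 := hKbd (half c) (half a) (show (b:ℕ)/2 < (c:ℕ)/2 by omega)
      (show (c:ℕ)/2 ≤ (d:ℕ)/2 by omega) (A.symm' hAac)
    have h3 : (b:ℕ)/2 < (a:ℕ)/2 := h2.1
    omega
  · -- a,c odd; b,d even : contradiction
    exfalso
    have hac2 : ((half a) : ℕ) ≤ (half c : ℕ) := show (a:ℕ)/2 ≤ (c:ℕ)/2 by omega
    rw [kSetoid_rel_of_le A hac2] at hKac
    have h2 := hKac (half b) (half d) (show (a:ℕ)/2 < (b:ℕ)/2 by omega)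
      (show (b:ℕ)/2 ≤ (c:ℕ)/2 by omega) hAbd
    have h3 : (d:ℕ)/2 ≤ (c:ℕ)/2 := h2.2
    omega
  · -- all odd : use noncrossing of kSetoid
    refine Or.inr ⟨ha, hb, ?_⟩
    refine kSetoid_nc hA (half a) (half b) (half c) (half d) ?_ ?_ ?_ hKac hKbd
    · show (a : ℕ)/2 < (b : ℕ)/2; omega
    · show (b : ℕ)/2 < (c : ℕ)/2; omega
    · show (c : ℕ)/2 < (d : ℕ)/2; omega

/-- Admissibility forces the second partition to refine the Kreweras complement. -/
theorem le_k_of_adm {A B : Setoid (Fin n)} (hsh : IsNoncrossing (shuffle2 A B)) :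
    ∀ i j : Fin n, B i j → kSetoid A i j := by
  have main : ∀ i j : Fin n, (i:ℕ) < j → B i j → Cln A i j := by
    intro i j hij hB
    intro x y hx1 hx2 hxy
    constructor
    · by_contra h
      push_neg at h  -- y ≤ i
      have h1 := hsh ⟨2*(y:ℕ), by have := y.isLt; omega⟩ ⟨2*(i:ℕ)+1, by have := i.isLt; omega⟩
        ⟨2*(x:ℕ), by have := x.isLt; omega⟩ ⟨2*(j:ℕ)+1, by have := j.isLt; omega⟩
        (show 2*(y:ℕ) < 2*(i:ℕ)+1 by omega) (show 2*(i:ℕ)+1 < 2*(x:ℕ) by omega)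
        (show 2*(x:ℕ) < 2*(j:ℕ)+1 by omega)
        (shuffle2_even (A.symm' hxy)) (shuffle2_odd hB)
      rw [shuffle2_rel_iff] at h1
      rcases h1 with ⟨_, h2, _⟩ | ⟨h2, _, _⟩
      · have h3 : (2*(i:ℕ)+1) % 2 = 0 := h2; omega
      · have h3 : (2*(y:ℕ)) % 2 = 1 := h2; omega
    · by_contra h
      push_neg at h  -- j < y
      have h1 := hsh ⟨2*(i:ℕ)+1, by have := i.isLt; omega⟩ ⟨2*(x:ℕ), by have := x.isLt; omega⟩
        ⟨2*(j:ℕ)+1, by have := j.isLt; omega⟩ ⟨2*(y:ℕ), by have := y.isLt; omega⟩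
        (show 2*(i:ℕ)+1 < 2*(x:ℕ) by omega) (show 2*(x:ℕ) < 2*(j:ℕ)+1 by omega)
        (show 2*(j:ℕ)+1 < 2*(y:ℕ) by omega)
        (shuffle2_odd hB) (shuffle2_even hxy)
      rw [shuffle2_rel_iff] at h1
      rcases h1 with ⟨h2, _, _⟩ | ⟨_, h2, _⟩
      · have h3 : (2*(i:ℕ)+1) % 2 = 0 := h2; omega
      · have h3 : (2*(x:ℕ)) % 2 = 1 := h2; omega
  intro i j hB
  rcases lt_trichotomy (i:ℕ) (j:ℕ) with h | h | h
  · rw [kSetoid_rel_of_le A (le_of_lt h)]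
    exact main i j h hB
  · have hij : i = j := Fin.ext h
    subst hij
    exact (kSetoid A).refl' i
  · exact (kSetoid A).symm' (by
      rw [kSetoid_rel_of_le A (le_of_lt h)]
      exact main j i h (B.symm' hB))
section Connect

variable {A : Setoid (Fin n)} {δ : Setoid (Fin (2*n))}

theorem delta_pair (h2 : intervalSetoid 2 n ≤ δ) (u v : Fin (2*n))
    (h : (u : ℕ)/2 = (v : ℕ)/2) : δ u v := by
  refine Setoid.le_def.mp h2 ?_
  exact h

theorem delta_even (h1 : shuffle2 A (kSetoid A) ≤ δ) {s t : Fin n} (h : A s t) :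
    δ ⟨2*(s:ℕ), by have := s.isLt; omega⟩ ⟨2*(t:ℕ), by have := t.isLt; omega⟩ :=
  Setoid.le_def.mp h1 (shuffle2_even h)

theorem delta_odd (h1 : shuffle2 A (kSetoid A) ≤ δ) {s t : Fin n} (h : kSetoid A s t) :
    δ ⟨2*(s:ℕ)+1, by have := s.isLt; omega⟩ ⟨2*(t:ℕ)+1, by have := t.isLt; omega⟩ :=
  Setoid.le_def.mp h1 (shuffle2_odd h)

theorem connect (hA : IsNoncrossing A)
    (h1 : shuffle2 A (kSetoid A) ≤ δ) (h2 : intervalSetoid 2 n ≤ δ) :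
    ∀ (d i j a : ℕ) (_ : i ≤ a) (haj : a ≤ j) (hj : j < n) (_ : j - i ≤ d) (_ : Cln A i j),
      δ ⟨2*a+1, by omega⟩ ⟨2*j+1, by omega⟩ := by
  classical
  intro d
  induction d with
  | zero =>
    intro i j a hia haj hj hd _
    have haj' : a = j := by omega
    subst haj'
    exact δ.refl' _
  | succ d ih =>
    intro i j a hia haj hj hd hcl
    by_cases haj' : a = j
    · subst haj'; exact δ.refl' _
    have haj2 : a < j := lt_of_le_of_ne haj haj'
    set jF : Fin n := ⟨j, hj⟩ with hjF
    set aF : Fin n := ⟨a, by omega⟩ with haF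
    by_cases hB : A aF jF
    · -- 2a+1 ~ 2a ~ 2j ~ 2j+1
      have e1 : δ ⟨2*a+1, by omega⟩ ⟨2*a, by omega⟩ :=
        delta_pair h2 _ _ (by show (2*a+1)/2 = 2*a/2; omega)
      have e2 : δ ⟨2*a, by omega⟩ ⟨2*j, by omega⟩ := delta_even h1 hB
      have e3 : δ ⟨2*j, by omega⟩ ⟨2*j+1, by omega⟩ :=
        delta_pair h2 _ _ (by show (2*j)/2 = (2*j+1)/2; omega)
      exact δ.trans' e1 (δ.trans' e2 e3)
    · -- m := least element of the block of j strictly above a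
      have hmne : (Finset.univ.filter (fun x : Fin n => a < (x:ℕ) ∧ A x jF)).Nonempty :=
        ⟨jF, by simp [haj2, A.refl']; exact haj2⟩
      set mF : Fin n := Finset.min' _ hmne with hmF
      have hmmem : a < (mF:ℕ) ∧ A mF jF := by
        have h := Finset.min'_mem _ hmne
        rw [Finset.mem_filter] at h
        exact h.2
      have hmmin : ∀ x : Fin n, a < (x:ℕ) → A x jF → (mF:ℕ) ≤ (x:ℕ) := by
        intro x hx1 hx2
        exact Finset.min'_le (Finset.univ.filter (fun x : Fin n => a < (x:ℕ) ∧ A x jF)) x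
          (by simp [hx1, hx2])
      set m : ℕ := (mF : ℕ) with hm
      have hmj : m ≤ j := hmmin jF haj2 (A.refl' jF)
      have ham : a < m := hmmem.1
      by_cases hbex : (Finset.univ.filter
          (fun x : Fin n => i < (x:ℕ) ∧ (x:ℕ) ≤ a ∧ A x jF)).Nonempty
      · -- b exists
        set bF : Fin n := Finset.max' _ hbex with hbF
        have hbmem : i < (bF:ℕ) ∧ (bF:ℕ) ≤ a ∧ A bF jF := by
          have h := Finset.max'_mem _ hbex
          rw [Finset.mem_filter] at h
          exact h.2
        have hbmax : ∀ x : Fin n, i < (x:ℕ) → (x:ℕ) ≤ a → A x jF → (x:ℕ) ≤ (bF:ℕ) := by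
          intro x hx1 hx2 hx3
          exact Finset.le_max'
            (Finset.univ.filter (fun x : Fin n => i < (x:ℕ) ∧ (x:ℕ) ≤ a ∧ A x jF)) x
            (by simp [hx1, hx2, hx3])
        set b : ℕ := (bF : ℕ) with hb
        have hbm : A bF mF := A.trans' hbmem.2.2 (A.symm' hmmem.2)
        have hclb : Cln A b (m-1) := by
          intro x y hx1 hx2 hxy
          have hxij := hcl x y (by omega) (by omega) hxy
          have hxnB : ¬ A x jF := by
            intro hc
            by_cases hxa : (x:ℕ) ≤ a
            · have := hbmax x (by omega) hxa hc; omega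
            · have := hmmin x (by omega) hc; omega
          have hynB : ¬ A y jF := fun hc => hxnB (A.trans' hxy hc)
          constructor
          · by_contra hyb
            push_neg at hyb  -- y ≤ b
            have hyb' : (y:ℕ) < b := by
              rcases lt_or_eq_of_le hyb with h | h
              · exact h
              · exfalso; exact hynB (by
                  have : y = bF := Fin.ext h
                  rw [this]; exact hbmem.2.2)
            have := hA y bF x mF (show (y:ℕ) < b from hyb') (show b < (x:ℕ) from hx1)
              (show (x:ℕ) < m by omega) (A.symm' hxy) hbm
            exact hynB (A.trans' this hbmem.2.2)
          · by_contra hym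
            push_neg at hym  -- m - 1 < y
            have hym' : m < (y:ℕ) := by
              rcases Nat.lt_or_ge (m:ℕ) (y:ℕ) with h | h
              · exact h
              · exfalso
                have : (y:ℕ) = m := by omega
                exact hynB (by
                  have : y = mF := Fin.ext this
                  rw [this]; exact hmmem.2)
            have := hA bF x mF y (show b < (x:ℕ) from hx1) (show (x:ℕ) < m by omega)
              hym' hbm hxy
            exact hxnB (A.trans' (A.symm' this) hbmem.2.2)
        have r1 : δ ⟨2*a+1, by omega⟩ ⟨2*(m-1)+1, by omega⟩ :=
          ih b (m-1) a (by omega) (by omega) (by omega) (by omega) hclb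
        have r2 : δ ⟨2*b+1, by omega⟩ ⟨2*(m-1)+1, by omega⟩ :=
          ih b (m-1) b (le_refl b) (by omega) (by omega) (by omega) hclb
        have e1 : δ ⟨2*a+1, by omega⟩ ⟨2*b+1, by omega⟩ := δ.trans' r1 (δ.symm' r2)
        have e2 : δ ⟨2*b+1, by omega⟩ ⟨2*b, by omega⟩ :=
          delta_pair h2 _ _ (by show (2*b+1)/2 = 2*b/2; omega)
        have e3 : δ ⟨2*b, by omega⟩ ⟨2*j, by omega⟩ := delta_even h1 hbmem.2.2
        have e4 : δ ⟨2*j, by omega⟩ ⟨2*j+1, by omega⟩ :=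
          delta_pair h2 _ _ (by show (2*j)/2 = (2*j+1)/2; omega)
        exact δ.trans' e1 (δ.trans' e2 (δ.trans' e3 e4))
      · -- no b : initial segment
        have hcli : Cln A i (m-1) := by
          intro x y hx1 hx2 hxy
          have hxij := hcl x y hx1 (by omega) hxy
          have hxnB : ¬ A x jF := by
            intro hc
            by_cases hxa : (x:ℕ) ≤ a
            · exact hbex ⟨x, by simp [hx1, hxa, hc]⟩
            · have := hmmin x (by omega) hc; omega
          have hynB : ¬ A y jF := fun hc => hxnB (A.trans' hxy hc)
          refine ⟨hxij.1, ?_⟩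
          by_contra hym
          push_neg at hym
          have hym' : m < (y:ℕ) := by
            rcases Nat.lt_or_ge (m:ℕ) (y:ℕ) with h | h
            · exact h
            · exfalso
              have hh : (y:ℕ) = m := by omega
              exact hynB (by
                have : y = mF := Fin.ext hh
                rw [this]; exact hmmem.2)
          have hyj : (y:ℕ) < j := by
            rcases lt_or_eq_of_le hxij.2 with h | h
            · exact h
            · exfalso
              exact hynB (by
                have e : y = jF := Fin.ext h
                rw [e])
          have := hA x mF y jF (show (x:ℕ) < m by omega) hym' hyj hxy hmmem.2
          exact hxnB (A.trans' this hmmem.2)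
        have r1 : δ ⟨2*a+1, by omega⟩ ⟨2*(m-1)+1, by omega⟩ :=
          ih i (m-1) a hia (by omega) (by omega) (by omega) hcli
        have r2 : δ ⟨2*i+1, by omega⟩ ⟨2*(m-1)+1, by omega⟩ :=
          ih i (m-1) i (le_refl i) (by omega) (by omega) (by omega) hcli
        have e1 : δ ⟨2*a+1, by omega⟩ ⟨2*i+1, by omega⟩ := δ.trans' r1 (δ.symm' r2)
        have e2 : δ ⟨2*i+1, by omega⟩ ⟨2*j+1, by omega⟩ := by
          have hk : kSetoid A ⟨i, by omega⟩ jF := by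
            rw [kSetoid_rel_of_le A (show ((⟨i, by omega⟩ : Fin n) : ℕ) ≤ (jF : ℕ) by
              show i ≤ j; omega)]
            exact hcl
          exact delta_odd h1 hk
        exact δ.trans' e1 e2

end Connect
theorem top_rel {Z : Type*} (u v : Z) : (⊤ : Setoid Z) u v := by
  rw [show ((⊤ : Setoid Z) : Z → Z → Prop) = ⊤ from Setoid.top_def]; trivial

theorem connect_all {A : Setoid (Fin n)} {δ : Setoid (Fin (2*n))} (hA : IsNoncrossing A)
    (h1 : shuffle2 A (kSetoid A) ≤ δ) (h2 : intervalSetoid 2 n ≤ δ)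
    (x y : Fin (2*n)) : δ x y := by
  classical
  have hn : 0 < n := by have := x.isLt; omega
  have odd1 : ∀ a : ℕ, ∀ ha : a < n, δ ⟨2*a+1, by omega⟩ ⟨1, by omega⟩ := by
    intro a ha
    set zF : Fin n := ⟨0, hn⟩ with hzF
    by_cases h0 : A ⟨a, ha⟩ zF
    · have e1 : δ ⟨2*a+1, by omega⟩ ⟨2*a, by omega⟩ :=
        delta_pair h2 _ _ (show (2*a+1)/2 = 2*a/2 by omega)
      have e2 : δ ⟨2*a, by omega⟩ ⟨2*0, by omega⟩ := delta_even h1 h0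
      have e3 : δ ⟨2*0, by omega⟩ ⟨1, by omega⟩ :=
        delta_pair h2 _ _ (show (2*0)/2 = 1/2 by omega)
      exact δ.trans' e1 (δ.trans' e2 e3)
    · have ha0 : a ≠ 0 := by
        intro h; subst h; exact h0 (A.refl' zF)
      have hBsne : (Finset.univ.filter (fun t : Fin n => (t:ℕ) ≤ a ∧ A t zF)).Nonempty :=
        ⟨zF, by rw [Finset.mem_filter]; exact ⟨Finset.mem_univ _, Nat.zero_le a, A.refl' zF⟩⟩
      set bF : Fin n := Finset.max' _ hBsne with hbF
      have hbmem : (bF:ℕ) ≤ a ∧ A bF zF := by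
        have h := Finset.max'_mem _ hBsne
        rw [Finset.mem_filter] at h
        exact h.2
      have hbmax : ∀ t : Fin n, (t:ℕ) ≤ a → A t zF → (t:ℕ) ≤ (bF:ℕ) := by
        intro t h1' h2'
        exact Finset.le_max' (Finset.univ.filter (fun t : Fin n => (t:ℕ) ≤ a ∧ A t zF)) t
          (by rw [Finset.mem_filter]; exact ⟨Finset.mem_univ _, h1', h2'⟩)
      have hba : (bF:ℕ) < a := by
        rcases lt_or_eq_of_le hbmem.1 with h | h
        · exact h
        · exfalso
          apply h0
          have e : (⟨a, ha⟩ : Fin n) = bF := Fin.ext h.symm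
          rw [e]; exact hbmem.2
      by_cases hm : (Finset.univ.filter (fun t : Fin n => a < (t:ℕ) ∧ A t zF)).Nonempty
      · set mF : Fin n := Finset.min' _ hm with hmF
        have hmmem : a < (mF:ℕ) ∧ A mF zF := by
          have h := Finset.min'_mem _ hm
          rw [Finset.mem_filter] at h
          exact h.2
        have hmmin : ∀ t : Fin n, a < (t:ℕ) → A t zF → (mF:ℕ) ≤ (t:ℕ) := by
          intro t h1' h2'
          exact Finset.min'_le (Finset.univ.filter (fun t : Fin n => a < (t:ℕ) ∧ A t zF)) t
            (by rw [Finset.mem_filter]; exact ⟨Finset.mem_univ _, h1', h2'⟩)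
        have hbm : A bF mF := A.trans' hbmem.2 (A.symm' hmmem.2)
        have hclb : Cln A (bF:ℕ) ((mF:ℕ)-1) := by
          intro u v hu1 hu2 huv
          have hunB : ¬ A u zF := by
            intro hc
            by_cases hua : (u:ℕ) ≤ a
            · have := hbmax u hua hc; omega
            · have := hmmin u (by omega) hc
              have hm1 := hmmem.1
              omega
          have hvnB : ¬ A v zF := fun hc => hunB (A.trans' huv hc)
          constructor
          · by_contra hvb; push_neg at hvb
            have hvb' : (v:ℕ) < (bF:ℕ) := by
              rcases lt_or_eq_of_le hvb with h | h
              · exact h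
              · exfalso
                apply hvnB
                have e : v = bF := Fin.ext h
                rw [e]; exact hbmem.2
            have hq := hA v bF u mF hvb' hu1 (by have := hmmem.1; omega) (A.symm' huv) hbm
            exact hvnB (A.trans' hq hbmem.2)
          · by_contra hvm; push_neg at hvm
            have hvm' : (mF:ℕ) < (v:ℕ) := by
              rcases Nat.lt_or_ge ((mF:ℕ)) ((v:ℕ)) with h | h
              · exact h
              · exfalso
                apply hvnB
                have e : v = mF := Fin.ext (by omega)
                rw [e]; exact hmmem.2
            have hq := hA bF u mF v hu1 (by have := hmmem.1; omega) hvm' hbm huv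
            exact hunB (A.trans' (A.symm' hq) hbmem.2)
        have hmlt := mF.isLt
        have hm1 := hmmem.1
        have r1 : δ ⟨2*a+1, by omega⟩ ⟨2*((mF:ℕ)-1)+1, by omega⟩ :=
          connect hA h1 h2 ((mF:ℕ)-1-(bF:ℕ)) (bF:ℕ) ((mF:ℕ)-1) a (by omega) (by omega)
            (by omega) (by omega) hclb
        have r2 : δ ⟨2*(bF:ℕ)+1, by omega⟩ ⟨2*((mF:ℕ)-1)+1, by omega⟩ :=
          connect hA h1 h2 ((mF:ℕ)-1-(bF:ℕ)) (bF:ℕ) ((mF:ℕ)-1) (bF:ℕ) (le_refl _) (by omega)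
            (by omega) (by omega) hclb
        have e1 : δ ⟨2*a+1, by omega⟩ ⟨2*(bF:ℕ)+1, by omega⟩ := δ.trans' r1 (δ.symm' r2)
        have e2 : δ ⟨2*(bF:ℕ)+1, by omega⟩ ⟨2*(bF:ℕ), by omega⟩ :=
          delta_pair h2 _ _ (show (2*(bF:ℕ)+1)/2 = 2*(bF:ℕ)/2 by omega)
        have e3 : δ ⟨2*(bF:ℕ), by omega⟩ ⟨2*0, by omega⟩ := delta_even h1 hbmem.2
        have e4 : δ ⟨2*0, by omega⟩ ⟨1, by omega⟩ :=
          delta_pair h2 _ _ (show (2*0)/2 = 1/2 by omega)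
        exact δ.trans' e1 (δ.trans' e2 (δ.trans' e3 e4))
      · have hclb : Cln A (bF:ℕ) (n-1) := by
          intro u v hu1 hu2 huv
          have hunB : ¬ A u zF := by
            intro hc
            by_cases hua : (u:ℕ) ≤ a
            · have := hbmax u hua hc; omega
            · exact hm ⟨u, by rw [Finset.mem_filter]; exact ⟨Finset.mem_univ _, by omega, hc⟩⟩
          have hvnB : ¬ A v zF := fun hc => hunB (A.trans' huv hc)
          refine ⟨?_, by have := v.isLt; omega⟩
          by_contra hvb; push_neg at hvb
          have hvb' : (v:ℕ) < (bF:ℕ) := by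
            rcases lt_or_eq_of_le hvb with h | h
            · exact h
            · exfalso
              apply hvnB
              have e : v = bF := Fin.ext h
              rw [e]; exact hbmem.2
          have hv0 : 0 < (v:ℕ) := by
            rcases Nat.eq_zero_or_pos (v:ℕ) with h | h
            · exfalso
              apply hvnB
              have e : v = zF := Fin.ext h
              rw [e]
            · exact h
          have hq := hA zF v bF u hv0 hvb' hu1 (A.symm' hbmem.2) (A.symm' huv)
          exact hvnB (A.symm' hq)
        have r1 : δ ⟨2*a+1, by omega⟩ ⟨2*(n-1)+1, by omega⟩ :=
          connect hA h1 h2 ((n-1)-(bF:ℕ)) (bF:ℕ) (n-1) a (by omega) (by omega)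
            (by omega) (by omega) hclb
        have r2 : δ ⟨2*(bF:ℕ)+1, by omega⟩ ⟨2*(n-1)+1, by omega⟩ :=
          connect hA h1 h2 ((n-1)-(bF:ℕ)) (bF:ℕ) (n-1) (bF:ℕ) (le_refl _) (by omega)
            (by omega) (by omega) hclb
        have e1 : δ ⟨2*a+1, by omega⟩ ⟨2*(bF:ℕ)+1, by omega⟩ := δ.trans' r1 (δ.symm' r2)
        have e2 : δ ⟨2*(bF:ℕ)+1, by omega⟩ ⟨2*(bF:ℕ), by omega⟩ :=
          delta_pair h2 _ _ (show (2*(bF:ℕ)+1)/2 = 2*(bF:ℕ)/2 by omega)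
        have e3 : δ ⟨2*(bF:ℕ), by omega⟩ ⟨2*0, by omega⟩ := delta_even h1 hbmem.2
        have e4 : δ ⟨2*0, by omega⟩ ⟨1, by omega⟩ :=
          delta_pair h2 _ _ (show (2*0)/2 = 1/2 by omega)
        exact δ.trans' e1 (δ.trans' e2 (δ.trans' e3 e4))
  have toOne : ∀ z : Fin (2*n), δ z ⟨1, by omega⟩ := by
    intro z
    have hz : (z:ℕ)/2 < n := by have := z.isLt; omega
    have s1 : δ z ⟨2*((z:ℕ)/2)+1, by omega⟩ :=
      delta_pair h2 _ _ (show (z:ℕ)/2 = (2*((z:ℕ)/2)+1)/2 by omega)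
    exact δ.trans' s1 (odd1 ((z:ℕ)/2) hz)
  exact δ.trans' (toOne x) (δ.symm' (toOne y))

theorem ncSup_top {A : Setoid (Fin n)} (hA : IsNoncrossing A) :
    ncSup (shuffle2 A (kSetoid A)) (intervalSetoid 2 n) = (⊤ : Setoid (Fin (2*n))) := by
  refine le_antisymm le_top (le_sInf ?_)
  intro γ hγ
  rw [Setoid.le_def]
  intro x y _
  exact connect_all hA hγ.2.1 hγ.2.2 x y

theorem npow_two_top : (npow 2 (⊤ : NCP n)).1 = (⊤ : Setoid (Fin (2*n))) := by
  apply Setoid.ext; intro x y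
  constructor
  · intro _; exact top_rel x y
  · intro _; exact top_rel (half x) (half y)

theorem nroot_two_top : nroot 2 n (⊤ : Setoid (Fin (2*n))) = (⊤ : NCP n) := by
  have hex : ∃ σ : NCP n, (npow 2 σ).1 = (⊤ : Setoid (Fin (2*n))) := ⟨⊤, npow_two_top⟩
  unfold nroot
  rw [dif_pos hex]
  have hspec := hex.choose_spec
  apply Subtype.ext
  apply Setoid.ext
  intro x y
  constructor
  · intro _; exact top_rel x y
  · intro _
    have hx2 : 2*(x:ℕ) < 2*n := by have := x.isLt; omega
    have hy2 : 2*(y:ℕ) < 2*n := by have := y.isLt; omega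
    have h : (npow 2 hex.choose).1 ⟨2*(x:ℕ), hx2⟩ ⟨2*(y:ℕ), hy2⟩ := by
      rw [hspec]; exact top_rel _ _
    have h2 : hex.choose.1 (half ⟨2*(x:ℕ), hx2⟩) (half ⟨2*(y:ℕ), hy2⟩) := h
    have e1 : half (⟨2*(x:ℕ), hx2⟩ : Fin (2*n)) = x := Fin.ext (show 2*(x:ℕ)/2 = (x:ℕ) by omega)
    have e2 : half (⟨2*(y:ℕ), hy2⟩ : Fin (2*n)) = y := Fin.ext (show 2*(y:ℕ)/2 = (y:ℕ) by omega)
    rw [e1, e2] at h2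
    exact h2

theorem comp_k_top {α : NCP n} : comp α ⟨kSetoid α.1, kSetoid_nc α.2⟩ = (⊤ : NCP n) := by
  show nroot 2 n (ncSup (shuffle2 α.1 (kSetoid α.1)) (intervalSetoid 2 n)) = ⊤
  rw [ncSup_top α.2]
  exact nroot_two_top

theorem ncSup_top_of_nroot {S : Setoid (Fin (2*n))} (h : nroot 2 n S = (⊤ : NCP n)) (hn : 2 ≤ n) :
    S = (⊤ : Setoid (Fin (2*n))) := by
  by_cases hex : ∃ σ : NCP n, (npow 2 σ).1 = S
  · have hspec := hex.choose_spec
    have h2 : nroot 2 n S = hex.choose := by unfold nroot; rw [dif_pos hex]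
    rw [h] at h2
    rw [← hspec, ← h2, npow_two_top]
  · exfalso
    have h2 : nroot 2 n S = (⊥ : NCP n) := by unfold nroot; rw [dif_neg hex]
    rw [h] at h2
    have h3 : ((⊤ : NCP n) : Setoid (Fin n)) = ((⊥ : NCP n) : Setoid (Fin n)) :=
      congrArg Subtype.val h2
    have h3' : (⊤ : Setoid (Fin n)) = (⊥ : Setoid (Fin n)) := h3
    have h4 : (⊥ : Setoid (Fin n)) (⟨0, by omega⟩ : Fin n) ⟨1, by omega⟩ := by
      rw [← h3']; exact top_rel _ _
    rw [show ((⊥ : Setoid (Fin n)) : Fin n → Fin n → Prop) = (· = ·) from Setoid.bot_def] at h4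
    have h5 : (0:ℕ) = 1 := congrArg Fin.val h4
    omega
theorem ker_interval_nc {N : ℕ} (L R : ℕ) :
    IsNoncrossing (Setoid.ker (fun z : Fin N => L < (z:ℕ) ∧ (z:ℕ) ≤ R)) := by
  intro a b c d hab hbc hcd hac hbd
  have vab : (a:ℕ) < b := hab
  have vbc : (b:ℕ) < c := hbc
  have vcd : (c:ℕ) < d := hcd
  have hac' : (L < (a:ℕ) ∧ (a:ℕ) ≤ R) = (L < (c:ℕ) ∧ (c:ℕ) ≤ R) := hac
  have hbd' : (L < (b:ℕ) ∧ (b:ℕ) ≤ R) = (L < (d:ℕ) ∧ (d:ℕ) ≤ R) := hbd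
  show (L < (a:ℕ) ∧ (a:ℕ) ≤ R) = (L < (b:ℕ) ∧ (b:ℕ) ≤ R)
  rw [eq_iff_iff] at hac' hbd' ⊢
  constructor
  · intro ha
    have hc := hac'.mp ha
    exact ⟨by omega, by omega⟩
  · intro hb
    have hd := hbd'.mp hb
    by_contra hna
    have hnc : ¬(L < (c:ℕ) ∧ (c:ℕ) ≤ R) := fun hc => hna (hac'.mpr hc)
    exact hnc ⟨by omega, by omega⟩

theorem uniq_main {A B : Setoid (Fin n)} (hA : IsNoncrossing A) (hBnc : IsNoncrossing B)
    (hadm : IsNoncrossing (shuffle2 A B))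
    (htop : ncSup (shuffle2 A B) (intervalSetoid 2 n) = (⊤ : Setoid (Fin (2*n)))) :
    B = kSetoid A := by
  classical
  have hBK := le_k_of_adm hadm
  by_contra hne
  have hwit : ∃ i j : Fin n, kSetoid A i j ∧ ¬ B i j := by
    by_contra hw
    push_neg at hw
    exact hne (Setoid.ext fun i j => ⟨hBK i j, hw i j⟩)
  obtain ⟨i0, j0, hk0, hb0⟩ := hwit
  have hne0 : (i0:ℕ) ≠ (j0:ℕ) := by
    intro h
    have e : i0 = j0 := Fin.ext h
    subst e
    exact hb0 (B.refl' i0)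
  obtain ⟨iF, jF, hij, hkij, hbij⟩ :
      ∃ iF jF : Fin n, (iF:ℕ) < (jF:ℕ) ∧ kSetoid A iF jF ∧ ¬ B iF jF := by
    rcases Nat.lt_or_ge (i0:ℕ) (j0:ℕ) with h | h
    · exact ⟨i0, j0, h, hk0, hb0⟩
    · have h' : (j0:ℕ) < (i0:ℕ) := by omega
      exact ⟨j0, i0, h', (kSetoid A).symm' hk0, fun hc => hb0 (B.symm' hc)⟩
  -- the K-class of jF
  have hCne : (Finset.univ.filter (fun x : Fin n => kSetoid A x jF)).Nonempty :=
    ⟨jF, by rw [Finset.mem_filter]; exact ⟨Finset.mem_univ _, (kSetoid A).refl' jF⟩⟩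
  set m0F : Fin n := Finset.min' _ hCne with hm0F
  have hm0C : kSetoid A m0F jF := by
    have h := Finset.min'_mem _ hCne
    rw [Finset.mem_filter] at h
    exact h.2
  have hm0min : ∀ x : Fin n, kSetoid A x jF → (m0F:ℕ) ≤ (x:ℕ) := by
    intro x hx
    exact Finset.min'_le (Finset.univ.filter (fun x : Fin n => kSetoid A x jF)) x
      (by rw [Finset.mem_filter]; exact ⟨Finset.mem_univ _, hx⟩)
  -- an element of the class that is not B-related to the minimum
  obtain ⟨c0F, hc0C, hc0nB⟩ : ∃ c0 : Fin n, kSetoid A c0 jF ∧ ¬ B m0F c0 := by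
    by_cases h : B m0F iF
    · exact ⟨jF, (kSetoid A).refl' jF, fun hc => hbij (B.trans' (B.symm' h) hc)⟩
    · exact ⟨iF, hkij, h⟩
  -- the B-class of c0F
  have hDne : (Finset.univ.filter (fun x : Fin n => B x c0F)).Nonempty :=
    ⟨c0F, by rw [Finset.mem_filter]; exact ⟨Finset.mem_univ _, B.refl' c0F⟩⟩
  set dminF : Fin n := Finset.min' _ hDne with hdminF
  set dmaxF : Fin n := Finset.max' _ hDne with hdmaxF
  have hdminD : B dminF c0F := by
    have h := Finset.min'_mem _ hDne
    rw [Finset.mem_filter] at h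
    exact h.2
  have hdmaxD : B dmaxF c0F := by
    have h := Finset.max'_mem _ hDne
    rw [Finset.mem_filter] at h
    exact h.2
  have hDlb : ∀ x : Fin n, B x c0F → (dminF:ℕ) ≤ (x:ℕ) := by
    intro x hx
    exact Finset.min'_le (Finset.univ.filter (fun x : Fin n => B x c0F)) x
      (by rw [Finset.mem_filter]; exact ⟨Finset.mem_univ _, hx⟩)
  have hDub : ∀ x : Fin n, B x c0F → (x:ℕ) ≤ (dmaxF:ℕ) := by
    intro x hx
    exact Finset.le_max' (Finset.univ.filter (fun x : Fin n => B x c0F)) x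
      (by rw [Finset.mem_filter]; exact ⟨Finset.mem_univ _, hx⟩)
  have hDsubC : ∀ x : Fin n, B x c0F → kSetoid A x jF :=
    fun x hx => (kSetoid A).trans' (hBK _ _ hx) hc0C
  have hm0dmin : (m0F:ℕ) < (dminF:ℕ) := by
    have h1 : (m0F:ℕ) ≤ (dminF:ℕ) := hm0min dminF (hDsubC _ hdminD)
    rcases lt_or_eq_of_le h1 with h | h
    · exact h
    · exfalso
      apply hc0nB
      have e : m0F = dminF := Fin.ext h
      rw [e]; exact hdminD
  -- the largest class element below dminF
  have hPne : (Finset.univ.filter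
      (fun x : Fin n => kSetoid A x jF ∧ (x:ℕ) < (dminF:ℕ))).Nonempty :=
    ⟨m0F, by rw [Finset.mem_filter]; exact ⟨Finset.mem_univ _, hm0C, hm0dmin⟩⟩
  set pF : Fin n := Finset.max' _ hPne with hpF
  have hpmem : kSetoid A pF jF ∧ (pF:ℕ) < (dminF:ℕ) := by
    have h := Finset.max'_mem _ hPne
    rw [Finset.mem_filter] at h
    exact h.2
  have hpmax : ∀ x : Fin n, kSetoid A x jF → (x:ℕ) < (dminF:ℕ) → (x:ℕ) ≤ (pF:ℕ) := by
    intro x h1' h2'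
    exact Finset.le_max'
      (Finset.univ.filter (fun x : Fin n => kSetoid A x jF ∧ (x:ℕ) < (dminF:ℕ))) x
      (by rw [Finset.mem_filter]; exact ⟨Finset.mem_univ _, h1', h2'⟩)
  have hdd' : (dminF:ℕ) ≤ (dmaxF:ℕ) := hDlb dmaxF hdmaxD
  have hpq : (pF:ℕ) < (dmaxF:ℕ) := by have := hpmem.2; omega
  have hKpq : kSetoid A pF dmaxF :=
    (kSetoid A).trans' hpmem.1 ((kSetoid A).symm' (hDsubC _ hdmaxD))
  have hClpq : Cln A (pF:ℕ) (dmaxF:ℕ) := (kSetoid_rel_of_le A (le_of_lt hpq)).mp hKpq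
  -- saturation of the interval (pF, dmaxF] under B
  have hsat : ∀ x y : Fin n, (pF:ℕ) < (x:ℕ) → (x:ℕ) ≤ (dmaxF:ℕ) → B x y →
      ((pF:ℕ) < (y:ℕ) ∧ (y:ℕ) ≤ (dmaxF:ℕ)) := by
    intro x y hx1 hx2 hxy
    by_contra hy
    push_neg at hy
    have hKxy : kSetoid A x y := hBK _ _ (by exact hxy)
    by_cases hxC : kSetoid A x jF
    · have hxmin : (dminF:ℕ) ≤ (x:ℕ) := by
        by_contra hlt; push_neg at hlt
        have := hpmax x hxC hlt; omega
      by_cases hxD : B x c0F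
      · have hyD : B y c0F := B.trans' (B.symm' hxy) hxD
        have h1 := hDlb y hyD
        have h2 := hDub y hyD
        have h4 : (pF:ℕ) < (y:ℕ) := by have := hpmem.2; omega
        have h5 := hy h4
        omega
      · have hxne1 : (x:ℕ) ≠ (dminF:ℕ) := by
          intro h
          apply hxD
          have e : x = dminF := Fin.ext h
          rw [e]; exact hdminD
        have hxne2 : (x:ℕ) ≠ (dmaxF:ℕ) := by
          intro h
          apply hxD
          have e : x = dmaxF := Fin.ext h
          rw [e]; exact hdmaxD
        have hdd : B dminF dmaxF := B.trans' hdminD (B.symm' hdmaxD)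
        by_cases hyp : (y:ℕ) ≤ (pF:ℕ)
        · have h6 := hBnc y dminF x dmaxF (show (y:ℕ) < (dminF:ℕ) by have := hpmem.2; omega)
            (show (dminF:ℕ) < (x:ℕ) by omega) (show (x:ℕ) < (dmaxF:ℕ) by omega)
            (B.symm' hxy) hdd
          exact hxD (B.trans' (B.trans' hxy h6) hdminD)
        · have h4 : (pF:ℕ) < (y:ℕ) := by omega
          have h5 := hy h4
          have h6 := hBnc dminF x dmaxF y (show (dminF:ℕ) < (x:ℕ) by omega)
            (show (x:ℕ) < (dmaxF:ℕ) by omega) (show (dmaxF:ℕ) < (y:ℕ) from h5) hdd hxy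
          exact hxD (B.trans' (B.symm' h6) hdminD)
    · have hynC : ¬ kSetoid A y jF := fun hc => hxC ((kSetoid A).trans' hKxy hc)
      have hxq : (x:ℕ) < (dmaxF:ℕ) := by
        rcases lt_or_eq_of_le hx2 with h | h
        · exact h
        · exfalso
          apply hxC
          have e : x = dmaxF := Fin.ext h
          rw [e]; exact hDsubC _ hdmaxD
      by_cases hyp : (y:ℕ) ≤ (pF:ℕ)
      · have hyne : (y:ℕ) ≠ (pF:ℕ) := by
          intro h
          apply hynC
          have e : y = pF := Fin.ext h
          rw [e]; exact hpmem.1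
        have h6 := kSetoid_nc hA y pF x dmaxF (show (y:ℕ) < (pF:ℕ) by omega) hx1 hxq
          ((kSetoid A).symm' hKxy) hKpq
        exact hynC ((kSetoid A).trans' h6 hpmem.1)
      · have h4 : (pF:ℕ) < (y:ℕ) := by omega
        have h5 := hy h4
        have h6 := kSetoid_nc hA pF x dmaxF y hx1 hxq h5 hKpq hKxy
        exact hxC ((kSetoid A).trans' ((kSetoid A).symm' h6) hpmem.1)
  -- the splitting noncrossing upper bound
  have hδ1 : shuffle2 A B ≤
      Setoid.ker (fun z : Fin (2*n) => 2*(pF:ℕ)+1 < (z:ℕ) ∧ (z:ℕ) ≤ 2*(dmaxF:ℕ)+1) := by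
    rw [Setoid.le_def]
    intro x y hxy
    rw [shuffle2_rel_iff] at hxy
    show (2*(pF:ℕ)+1 < (x:ℕ) ∧ (x:ℕ) ≤ 2*(dmaxF:ℕ)+1) =
      (2*(pF:ℕ)+1 < (y:ℕ) ∧ (y:ℕ) ≤ 2*(dmaxF:ℕ)+1)
    rw [eq_iff_iff]
    rcases hxy with ⟨hx0, hy0, hAr⟩ | ⟨hx1, hy1, hBr⟩
    · constructor
      · intro hx
        have h := hClpq (half x) (half y) (show (pF:ℕ) < (x:ℕ)/2 by omega)
          (show (x:ℕ)/2 ≤ (dmaxF:ℕ) by omega) hAr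
        have h' : (pF:ℕ) < (y:ℕ)/2 ∧ (y:ℕ)/2 ≤ (dmaxF:ℕ) := h
        omega
      · intro hyy
        have h := hClpq (half y) (half x) (show (pF:ℕ) < (y:ℕ)/2 by omega)
          (show (y:ℕ)/2 ≤ (dmaxF:ℕ) by omega) (A.symm' hAr)
        have h' : (pF:ℕ) < (x:ℕ)/2 ∧ (x:ℕ)/2 ≤ (dmaxF:ℕ) := h
        omega
    · constructor
      · intro hx
        have h := hsat (half x) (half y) (show (pF:ℕ) < (x:ℕ)/2 by omega)
          (show (x:ℕ)/2 ≤ (dmaxF:ℕ) by omega) hBr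
        have h' : (pF:ℕ) < (y:ℕ)/2 ∧ (y:ℕ)/2 ≤ (dmaxF:ℕ) := h
        omega
      · intro hyy
        have h := hsat (half y) (half x) (show (pF:ℕ) < (y:ℕ)/2 by omega)
          (show (y:ℕ)/2 ≤ (dmaxF:ℕ) by omega) (B.symm' hBr)
        have h' : (pF:ℕ) < (x:ℕ)/2 ∧ (x:ℕ)/2 ≤ (dmaxF:ℕ) := h
        omega
  have hδ2 : intervalSetoid 2 n ≤
      Setoid.ker (fun z : Fin (2*n) => 2*(pF:ℕ)+1 < (z:ℕ) ∧ (z:ℕ) ≤ 2*(dmaxF:ℕ)+1) := by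
    rw [Setoid.le_def]
    intro x y hxy
    have h : (x:ℕ)/2 = (y:ℕ)/2 := hxy
    show (2*(pF:ℕ)+1 < (x:ℕ) ∧ (x:ℕ) ≤ 2*(dmaxF:ℕ)+1) =
      (2*(pF:ℕ)+1 < (y:ℕ) ∧ (y:ℕ) ≤ 2*(dmaxF:ℕ)+1)
    rw [eq_iff_iff]
    constructor
    · intro hh; exact ⟨by omega, by omega⟩
    · intro hh; exact ⟨by omega, by omega⟩
  have hmem : Setoid.ker (fun z : Fin (2*n) => 2*(pF:ℕ)+1 < (z:ℕ) ∧ (z:ℕ) ≤ 2*(dmaxF:ℕ)+1) ∈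
      {γ : Setoid (Fin (2*n)) | IsNoncrossing γ ∧ shuffle2 A B ≤ γ ∧ intervalSetoid 2 n ≤ γ} :=
    ⟨ker_interval_nc _ _, hδ1, hδ2⟩
  have hle : ncSup (shuffle2 A B) (intervalSetoid 2 n) ≤
      Setoid.ker (fun z : Fin (2*n) => 2*(pF:ℕ)+1 < (z:ℕ) ∧ (z:ℕ) ≤ 2*(dmaxF:ℕ)+1) :=
    sInf_le hmem
  rw [htop] at hle
  have hqlt := dmaxF.isLt
  have h01 : Setoid.ker (fun z : Fin (2*n) => 2*(pF:ℕ)+1 < (z:ℕ) ∧ (z:ℕ) ≤ 2*(dmaxF:ℕ)+1)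
      (⟨0, by omega⟩ : Fin (2*n)) ⟨2*(dmaxF:ℕ)+1, by omega⟩ :=
    Setoid.le_def.mp hle (top_rel _ _)
  have h2 : (2*(pF:ℕ)+1 < 0 ∧ 0 ≤ 2*(dmaxF:ℕ)+1) =
      (2*(pF:ℕ)+1 < 2*(dmaxF:ℕ)+1 ∧ 2*(dmaxF:ℕ)+1 ≤ 2*(dmaxF:ℕ)+1) := h01
  rw [eq_iff_iff] at h2
  have h3 := h2.mpr ⟨by omega, le_refl _⟩
  omega
end KrewerasAux

/-- **Statement 11.** For every `α ∈ NCP(n)` there is a unique noncrossing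
partition `K(α)` such that `(α, K(α))` is `n`-admissible and `α ∘ K(α) = 1_n`. -/
theorem kreweras_existsUnique (n : ℕ) (α : NCP n) :
    ∃! γ : NCP n, Admissible2 α γ ∧ comp α γ = ⊤ := by
  refine ⟨⟨kSetoid α.1, kSetoid_nc α.2⟩, ⟨?_, ?_⟩, ?_⟩
  · exact shuffle_k_nc α.2
  · exact comp_k_top
  · rintro γ' ⟨hadm', hcomp'⟩
    by_cases hn : 2 ≤ n
    · have hc2 : nroot 2 n (ncSup (shuffle2 α.1 γ'.1) (intervalSetoid 2 n)) = (⊤ : NCP n) :=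
        hcomp'
      have hS := ncSup_top_of_nroot hc2 hn
      exact Subtype.ext (uniq_main α.2 γ'.2 hadm' hS)
    · apply Subtype.ext
      apply Setoid.ext; intro x y
      have e : x = y := Fin.ext (by have hx := x.isLt; have hy := y.isLt; omega)
      subst e
      exact ⟨fun _ => (kSetoid α.1).refl' x, fun _ => γ'.1.refl' x⟩
end
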